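/- arXiv:2112.00516 — 8 statements merged into one kernel-verified Lean document; each statement's English description precedes it below -/
import Mathlib

section
/- Let n ≥ 1, let Ω ⊆ ℝⁿ be a compact set with 0 in its interior, let g : ℝⁿ → ℝⁿ be Lipschitz on Ω with g(0) = 0, and let V : ℝⁿ → ℝ be Lipschitz on Ω with V(0) = 0. Suppose there are constants a, b₁, b₂ > 0 such that b₁‖x‖^a ≤ V(x) for all x ∈ Ω, and D⁺V(x; g(x)) ≤ −b₂·V(x) for all x in the interior of Ω with x ≠ 0. Let r > 0 and set 𝒜 = {x ∈ Ω : V(x) ≤ r}, and assume 𝒜 is contained in the interior of Ω. If x : [t₀, ∞) → ℝⁿ is differentiable with x′(t) = g(x(t)) for all t ≥ t₀ and V(x(t₀)) < r, then for every t ≥ t₀ one has x(t) ∈ 𝒜 and ‖x(t)‖ ≤ (r/b₁)^{1/a} · exp(−(b₂/a)(t − t₀)). -/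
open Filter Set

/-- Upper Dini derivative of `V` at `x` in direction `y`:
`limsup_{h→0⁺} (V (x + h•y) - V x) / h`. -/
noncomputable def diniDeriv {n : ℕ} (V : EuclideanSpace ℝ (Fin n) → ℝ)
    (x y : EuclideanSpace ℝ (Fin n)) : ℝ :=
  Filter.limsup (fun h : ℝ => (V (x + h • y) - V x) / h) (nhdsWithin 0 (Set.Ioi 0))


lemma slope_ev {n : ℕ} {Ω : Set (EuclideanSpace ℝ (Fin n))}
    {K : NNReal} {V : EuclideanSpace ℝ (Fin n) → ℝ} (hV : LipschitzOnWith K V Ω)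
    {x : ℝ → EuclideanSpace ℝ (Fin n)} {t : ℝ} {y : EuclideanSpace ℝ (Fin n)}
    (hx : HasDerivAt x y t) (hxt : x t ∈ interior Ω) {c : ℝ}
    (hlim : Filter.limsup (fun h : ℝ => (V (x t + h • y) - V (x t)) / h)
      (nhdsWithin 0 (Set.Ioi 0)) < c) :
    ∀ᶠ z in nhdsWithin t (Set.Ioi t), slope (fun s => V (x s)) t z < c := by
  set p := x t with hp
  have hΩnhds : Ω ∈ nhds p := mem_interior_iff_mem_nhds.1 hxt
  have hpΩ : p ∈ Ω := interior_subset hxt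
  set L := Filter.limsup (fun h : ℝ => (V (p + h • y) - V p) / h) (nhdsWithin 0 (Set.Ioi 0)) with hL
  set c' := (L + c) / 2 with hc'
  have hLc' : L < c' := by simp only [hc']; linarith
  have hc'c : c' < c := by simp only [hc']; linarith
  set η := c - c' with hη
  have hηpos : 0 < η := by simp only [hη]; linarith
  -- eventually h > 0
  have ev1 : ∀ᶠ h in nhdsWithin (0:ℝ) (Set.Ioi 0), 0 < h := self_mem_nhdsWithin
  -- eventually p + h • y ∈ Ω
  have ev2 : ∀ᶠ h in nhdsWithin (0:ℝ) (Set.Ioi 0), p + h • y ∈ Ω := by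
    have hcont : ContinuousAt (fun h : ℝ => p + h • y) 0 :=
      (continuous_const.add (continuous_id.smul continuous_const)).continuousAt
    have : Ω ∈ nhds ((fun h : ℝ => p + h • y) 0) := by simpa using hΩnhds
    exact (hcont.eventually_mem this).filter_mono nhdsWithin_le_nhds
  -- boundedness of the Dini quotient
  have hbdd : IsBoundedUnder (· ≤ ·) (nhdsWithin (0:ℝ) (Set.Ioi 0))
      (fun h : ℝ => (V (p + h • y) - V p) / h) := by
    apply isBoundedUnder_of_eventually_le (a := (K : ℝ) * ‖y‖)
    filter_upwards [ev1, ev2] with h hh hmem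
    have h1 : V (p + h • y) - V p ≤ (K : ℝ) * ‖h • y‖ := by
      have := hV.dist_le_mul _ hmem _ hpΩ
      calc V (p + h • y) - V p ≤ |V (p + h • y) - V p| := le_abs_self _
        _ = dist (V (p + h • y)) (V p) := (Real.dist_eq _ _).symm
        _ ≤ (K : ℝ) * dist (p + h • y) p := this
        _ = (K : ℝ) * ‖h • y‖ := by rw [dist_eq_norm, add_sub_cancel_left]
    have h2 : ‖h • y‖ = h * ‖y‖ := by rw [norm_smul, Real.norm_eq_abs, abs_of_pos hh]
    rw [div_le_iff₀ hh]
    calc V (p + h • y) - V p ≤ (K : ℝ) * (h * ‖y‖) := by rw [← h2]; exact h1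
      _ = (K : ℝ) * ‖y‖ * h := by ring
  have ev3 : ∀ᶠ h in nhdsWithin (0:ℝ) (Set.Ioi 0), (V (p + h • y) - V p) / h < c' :=
    eventually_lt_of_limsup_lt hLc' hbdd
  -- transfer along z ↦ z - t
  have htend : Tendsto (fun z : ℝ => z - t) (nhdsWithin t (Set.Ioi t))
      (nhdsWithin 0 (Set.Ioi 0)) := by
    apply tendsto_nhdsWithin_iff.2
    constructor
    · have : Tendsto (fun z : ℝ => z - t) (nhds t) (nhds (t - t)) :=
        ((continuous_id.sub continuous_const).tendsto t)
      simpa using this.mono_left nhdsWithin_le_nhds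
    · filter_upwards [self_mem_nhdsWithin] with z hz
      exact sub_pos.2 (Set.mem_Ioi.1 hz)
  have evA := htend.eventually (ev1.and (ev2.and ev3))
  -- eventually x z ∈ Ω
  have evB : ∀ᶠ z in nhdsWithin t (Set.Ioi t), x z ∈ Ω :=
    (hx.continuousAt.eventually_mem hΩnhds).filter_mono nhdsWithin_le_nhds
  -- eventually K * ‖slope x t z - y‖ < η
  have evC : ∀ᶠ z in nhdsWithin t (Set.Ioi t), (K : ℝ) * ‖slope x t z - y‖ < η := by
    have hsl : Tendsto (slope x t) (nhdsWithin t (Set.Ioi t)) (nhds y) :=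
      (hasDerivAt_iff_tendsto_slope.1 hx).mono_left
        (nhdsWithin_mono _ (fun z hz => ne_of_gt hz))
    have : Tendsto (fun z => (K : ℝ) * ‖slope x t z - y‖) (nhdsWithin t (Set.Ioi t))
        (nhds ((K : ℝ) * ‖y - y‖)) :=
      (tendsto_const_nhds.mul ((hsl.sub tendsto_const_nhds).norm))
    simp only [sub_self, norm_zero, mul_zero] at this
    exact this.eventually_lt_const hηpos
  filter_upwards [evA, evB, evC] with z hzA hzB hzC
  obtain ⟨hh, hmem2, hlt3⟩ := hzA
  set h := z - t with hhdef
  have hxzmem : x z ∈ Ω := hzB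
  -- slope of x
  have hslx : slope x t z = h⁻¹ • (x z - p) := by
    rw [slope_def_module]
  have e2 : ‖x z - (p + h • y)‖ = h * ‖slope x t z - y‖ := by
    have : h • (slope x t z - y) = x z - (p + h • y) := by
      rw [hslx, smul_sub, smul_smul, mul_inv_cancel₀ (ne_of_gt hh), one_smul]
      abel
    rw [← this, norm_smul, Real.norm_eq_abs, abs_of_pos hh]
  have e1 : V (x z) - V (p + h • y) ≤ (K : ℝ) * ‖x z - (p + h • y)‖ := by
    have := hV.dist_le_mul _ hxzmem _ hmem2
    calc V (x z) - V (p + h • y) ≤ |V (x z) - V (p + h • y)| := le_abs_self _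
      _ = dist (V (x z)) (V (p + h • y)) := (Real.dist_eq _ _).symm
      _ ≤ (K : ℝ) * dist (x z) (p + h • y) := this
      _ = (K : ℝ) * ‖x z - (p + h • y)‖ := by rw [dist_eq_norm]
  have key : (V (x z) - V p) / h < c := by
    have split : (V (x z) - V p) / h
        = (V (x z) - V (p + h • y)) / h + (V (p + h • y) - V p) / h := by
      rw [← add_div]; ring_nf
    rw [split]
    have t1 : (V (x z) - V (p + h • y)) / h ≤ (K : ℝ) * ‖slope x t z - y‖ := by
      rw [div_le_iff₀ hh]
      calc V (x z) - V (p + h • y) ≤ (K : ℝ) * ‖x z - (p + h • y)‖ := e1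
        _ = (K : ℝ) * (h * ‖slope x t z - y‖) := by rw [e2]
        _ = (K : ℝ) * ‖slope x t z - y‖ * h := by ring
    have : (V (x z) - V (p + h • y)) / h + (V (p + h • y) - V p) / h < η + c' :=
      add_lt_add_of_le_of_lt (t1.trans hzC.le) hlt3
    linarith [hηpos]
  have : slope (fun s => V (x s)) t z = (V (x z) - V p) / h := by
    rw [slope_def_field]
  rw [this]
  exact key

/-- Theorem 2, exponential stability with explicit state-norm bound.
If `V` is a Lipschitz Lyapunov function on a compact set `Ω` (with `0` in its interior)
satisfying `b₁‖x‖^a ≤ V x` on `Ω` and `D⁺V(x; g x) ≤ -b₂ V x` on `Ω° \ {0}`, and the sublevel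
set `𝒜 = {x ∈ Ω | V x ≤ r}` is contained in `Ω°`, then any solution of `ẋ = g(x)` starting in
`𝒜°` stays in `𝒜` and satisfies `‖x(t)‖ ≤ (r/b₁)^{1/a} e^{-(b₂/a)(t-t₀)}`. -/
theorem cpa_exponential_stability
    {n : ℕ} (hn : 1 ≤ n)
    (Ω : Set (EuclideanSpace ℝ (Fin n))) (hΩcomp : IsCompact Ω) (hΩ0 : 0 ∈ interior Ω)
    (g : EuclideanSpace ℝ (Fin n) → EuclideanSpace ℝ (Fin n))
    (hg : ∃ K : NNReal, LipschitzOnWith K g Ω) (hg0 : g 0 = 0)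
    (V : EuclideanSpace ℝ (Fin n) → ℝ)
    (hV : ∃ K : NNReal, LipschitzOnWith K V Ω) (hV0 : V 0 = 0)
    (a b₁ b₂ : ℝ) (ha : 0 < a) (hb₁ : 0 < b₁) (hb₂ : 0 < b₂)
    (hlow : ∀ x ∈ Ω, b₁ * ‖x‖ ^ a ≤ V x)
    (hdec : ∀ x ∈ interior Ω, x ≠ 0 → diniDeriv V x (g x) ≤ -b₂ * V x)
    (r : ℝ) (hr : 0 < r)
    (A : Set (EuclideanSpace ℝ (Fin n))) (hA : A = {z ∈ Ω | V z ≤ r})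
    (hAsub : A ⊆ interior Ω)
    (t₀ : ℝ) (x : ℝ → EuclideanSpace ℝ (Fin n))
    (hx : ∀ t, t₀ ≤ t → HasDerivAt x (g (x t)) t)
    (hx₀Ω : x t₀ ∈ Ω) (hx₀ : V (x t₀) < r) :
    ∀ t, t₀ ≤ t →
      x t ∈ A ∧ ‖x t‖ ≤ (r / b₁) ^ (1 / a) * Real.exp (-(b₂ / a) * (t - t₀)) := by
  obtain ⟨K, hK⟩ := hV
  have hΩclosed : IsClosed Ω := hΩcomp.isClosed
  have hVcont : ContinuousOn V Ω := hK.continuousOn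
  have hVnonneg : ∀ z ∈ Ω, 0 ≤ V z := fun z hz =>
    le_trans (by positivity) (hlow z hz)
  have hAclosed : IsClosed A := by
    rw [hA]
    have : {z ∈ Ω | V z ≤ r} = Ω ∩ V ⁻¹' (Iic r) := rfl
    rw [this]
    exact hVcont.preimage_isClosed_of_isClosed hΩclosed isClosed_Iic
  have hx₀A : x t₀ ∈ A := by rw [hA]; exact ⟨hx₀Ω, hx₀.le⟩
  -- decay estimate on intervals where the solution stays in the interior of Ω
  have key : ∀ T, t₀ ≤ T → (∀ s ∈ Icc t₀ T, x s ∈ interior Ω) →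
      ∀ s ∈ Icc t₀ T, V (x s) ≤ V (x t₀) * Real.exp (-b₂ * (s - t₀)) := by
    intro T hT hmem s hs
    have hWcont : ContinuousOn (fun s => V (x s)) (Icc t₀ T) := by
      intro u hu
      have h1 : ContinuousAt x u := (hx u hu.1).continuousAt
      have h2 : ContinuousAt V (x u) :=
        hVcont.continuousAt (mem_interior_iff_mem_nhds.1 (hmem u hu))
      exact (h2.comp h1).continuousWithinAt
    have hf' : ∀ u ∈ Ico t₀ T, ∀ c, -b₂ * V (x u) < c →
        ∃ᶠ z in nhdsWithin u (Set.Ioi u), slope (fun s => V (x s)) u z < c := by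
      intro u hu c hc
      have hmem' := hmem u (Ico_subset_Icc_self hu)
      have hder := hx u hu.1
      have hlim : Filter.limsup (fun h : ℝ => (V (x u + h • g (x u)) - V (x u)) / h)
          (nhdsWithin 0 (Set.Ioi 0)) < c := by
        rcases eq_or_ne (x u) 0 with h0 | h0
        · have heq : (fun h : ℝ => (V (x u + h • g (x u)) - V (x u)) / h)
              = fun _ : ℝ => (0:ℝ) := by
            funext h
            rw [h0, hg0, smul_zero, add_zero, sub_self, zero_div]
          rw [heq, Filter.limsup_const]
          have : V (x u) = 0 := by rw [h0, hV0]
          rw [this, mul_zero] at hc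
          exact hc
        · exact lt_of_le_of_lt (hdec _ hmem' h0) hc
      exact (slope_ev hK hder hmem' hlim).frequently
    have hε : ∀ ε, 0 < ε → V (x s) ≤ V (x t₀) * Real.exp (-b₂ * (s - t₀)) + ε := by
      intro ε hεpos
      have hB : ∀ u : ℝ, HasDerivAt (fun u => V (x t₀) * Real.exp (-b₂ * (u - t₀)) + ε)
          (-b₂ * (V (x t₀) * Real.exp (-b₂ * (u - t₀)))) u := by
        intro u
        have h1 : HasDerivAt (fun u : ℝ => -b₂ * (u - t₀)) (-b₂) u := by
          simpa using (((hasDerivAt_id u).sub_const t₀).const_mul (-b₂))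
        have h2 := ((h1.exp).const_mul (V (x t₀))).add_const ε
        exact h2.congr_deriv (by ring)
      have bound : ∀ u ∈ Ico t₀ T,
          V (x u) = V (x t₀) * Real.exp (-b₂ * (u - t₀)) + ε →
          -b₂ * V (x u) < -b₂ * (V (x t₀) * Real.exp (-b₂ * (u - t₀))) := by
        intro u _ heq
        rw [heq]
        have : 0 < b₂ * ε := mul_pos hb₂ hεpos
        nlinarith
      have ha0 : V (x t₀) ≤ V (x t₀) * Real.exp (-b₂ * (t₀ - t₀)) + ε := by
        simp
        linarith
      exact image_le_of_liminf_slope_right_lt_deriv_boundary hWcont hf' ha0 hB bound hs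
    exact le_of_forall_pos_le_add hε
  -- forward invariance of A
  have main : ∀ T, t₀ ≤ T → ∀ s ∈ Icc t₀ T, x s ∈ A := by
    by_contra hcon
    push_neg at hcon
    obtain ⟨T, hT, s₁, hs₁, hs₁A⟩ := hcon
    set S' : Set ℝ := {u | u ∈ Icc t₀ T ∧ ∀ s ∈ Icc t₀ u, x s ∈ A} with hS'
    have ht₀S' : t₀ ∈ S' := by
      refine ⟨⟨le_refl _, hT⟩, fun s hsc => ?_⟩
      have : s = t₀ := le_antisymm hsc.2 hsc.1
      rw [this]; exact hx₀A
    have hbdd : BddAbove S' := ⟨T, fun u hu => hu.1.2⟩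
    set c := sSup S' with hc
    have hc₀ : t₀ ≤ c := le_csSup hbdd ht₀S'
    have hcT : c ≤ T := csSup_le ⟨t₀, ht₀S'⟩ (fun u hu => hu.1.2)
    have hAmemlt : ∀ s ∈ Ico t₀ c, x s ∈ A := by
      intro s hsc
      obtain ⟨u, hu, hsu⟩ := exists_lt_of_lt_csSup ⟨t₀, ht₀S'⟩ hsc.2
      exact hu.2 s ⟨hsc.1, hsu.le⟩
    have hxcA : x c ∈ A := by
      rcases eq_or_lt_of_le hc₀ with he | hlt
      · rw [← he]; exact hx₀A
      · have hcont : Tendsto x (nhdsWithin c (Ico t₀ c)) (nhds (x c)) :=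
          ((hx c hc₀).continuousAt).continuousWithinAt
        have hne : (nhdsWithin c (Ico t₀ c)).NeBot := by
          apply mem_closure_iff_nhdsWithin_neBot.1
          rw [closure_Ico (ne_of_lt hlt)]
          exact ⟨hc₀, le_refl c⟩
        exact hAclosed.mem_of_tendsto hcont
          (eventually_nhdsWithin_of_forall hAmemlt)
    have hcS' : c ∈ S' := by
      refine ⟨⟨hc₀, hcT⟩, fun s hsc => ?_⟩
      rcases lt_or_eq_of_le hsc.2 with hlt | he
      · exact hAmemlt s ⟨hsc.1, hlt⟩
      · rw [he]; exact hxcA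
    have hcltT : c < T := by
      rcases lt_or_eq_of_le hcT with h | h
      · exact h
      · exfalso; rw [h] at hcS'; exact hs₁A (hcS'.2 s₁ hs₁)
    -- V (x c) < r
    have hVxc : V (x c) < r := by
      have hdecay := key c hc₀ (fun s hsc => hAsub (hcS'.2 s hsc)) c ⟨hc₀, le_refl c⟩
      have hexp : Real.exp (-b₂ * (c - t₀)) ≤ 1 := by
        apply Real.exp_le_one_iff.2
        nlinarith
      have h0 : 0 ≤ V (x t₀) := hVnonneg _ hx₀Ω
      nlinarith [hdecay]
    -- extend to the right of c
    have hxcint : x c ∈ interior Ω := hAsub hxcA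
    have hVc : ContinuousAt (fun s => V (x s)) c :=
      (hVcont.continuousAt (mem_interior_iff_mem_nhds.1 hxcint)).comp
        (hx c hc₀).continuousAt
    have hxΩc : ContinuousAt x c := (hx c hc₀).continuousAt
    have hev : ∀ᶠ z in nhds c, V (x z) < r ∧ x z ∈ Ω := by
      have e1 : ∀ᶠ z in nhds c, V (x z) < r := hVc.eventually_lt_const hVxc
      have e2 : ∀ᶠ z in nhds c, x z ∈ Ω :=
        hxΩc.eventually_mem (mem_interior_iff_mem_nhds.1 hxcint)
      exact e1.and e2
    obtain ⟨δ, hδpos, hδ⟩ := Metric.eventually_nhds_iff.1 hev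
    set c' := min (c + δ / 2) T with hc'def
    have hcc' : c < c' := lt_min (by linarith) hcltT
    have hc'S' : c' ∈ S' := by
      refine ⟨⟨hc₀.trans hcc'.le, min_le_right _ _⟩, fun s hsc => ?_⟩
      rcases le_or_gt s c with hsle | hslt
      · exact hcS'.2 s ⟨hsc.1, hsle⟩
      · have hd : dist s c < δ := by
          rw [Real.dist_eq, abs_of_pos (by linarith)]
          have : s ≤ c + δ / 2 := hsc.2.trans (min_le_left _ _)
          linarith
        obtain ⟨h1, h2⟩ := hδ hd
        rw [hA]; exact ⟨h2, h1.le⟩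
    have : c' ≤ c := le_csSup hbdd hc'S'
    linarith
  -- conclusion
  intro t ht
  have hAt := main t ht
  have hxtA : x t ∈ A := hAt t ⟨ht, le_refl t⟩
  have hxtΩ : x t ∈ Ω := by rw [hA] at hxtA; exact hxtA.1
  refine ⟨hxtA, ?_⟩
  have hdecay := key t ht (fun s hsc => hAsub (hAt s hsc)) t ⟨ht, le_refl t⟩
  have hexp : 0 < Real.exp (-b₂ * (t - t₀)) := Real.exp_pos _
  have h1 : V (x t) ≤ r * Real.exp (-b₂ * (t - t₀)) := by
    calc V (x t) ≤ V (x t₀) * Real.exp (-b₂ * (t - t₀)) := hdecay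
      _ ≤ r * Real.exp (-b₂ * (t - t₀)) := by nlinarith
  have h2 : ‖x t‖ ^ a ≤ (r / b₁) * Real.exp (-b₂ * (t - t₀)) := by
    have := (hlow _ hxtΩ).trans h1
    rw [div_mul_eq_mul_div, le_div_iff₀ hb₁]
    linarith
  have h3 : ‖x t‖ = (‖x t‖ ^ a) ^ (1 / a) := by
    rw [← Real.rpow_mul (norm_nonneg _), mul_one_div, div_self (ne_of_gt ha),
      Real.rpow_one]
  rw [h3]
  calc (‖x t‖ ^ a) ^ (1 / a)
      ≤ ((r / b₁) * Real.exp (-b₂ * (t - t₀))) ^ (1 / a) :=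
        Real.rpow_le_rpow (Real.rpow_nonneg (norm_nonneg _) a) h2 (by positivity)
    _ = (r / b₁) ^ (1 / a) * (Real.exp (-b₂ * (t - t₀))) ^ (1 / a) :=
        Real.mul_rpow (by positivity) hexp.le
    _ = (r / b₁) ^ (1 / a) * Real.exp (-(b₂ / a) * (t - t₀)) := by
        rw [← Real.exp_mul]
        congr 1
        ring
end

section
/- Let n ≥ 1, let Ω ⊆ ℝⁿ be a compact set with 0 in its interior, let g : ℝⁿ → ℝⁿ be Lipschitz on Ω with g(0) = 0, and let V : ℝⁿ → ℝ be Lipschitz on Ω with V(0) = 0. Suppose there are constants a, b₁, b₂ > 0 such that b₁‖x‖^a ≤ V(x) for all x ∈ Ω, and D⁺V(x; g(x)) ≤ −b₂·V(x) for all x in the interior of Ω with x ≠ 0. Let r > 0, set 𝒜 = {x ∈ Ω : V(x) ≤ r}, and assume 𝒜 is contained in the interior of Ω. If x : [t₀, ∞) → ℝⁿ is differentiable with x′(t) = g(x(t)) for all t ≥ t₀ and V(x(t₀)) < r, then x(t) ∈ 𝒜 for all t ≥ t₀ and V(x(t)) ≤ V(x(t₀)) · exp(−b₂(t − t₀)) for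 all t ≥ t₀. -/
open Filter Set

/-- Theorem 2, exponential stability with explicit state-norm bound.
If `V` is a Lipschitz Lyapunov function on a compact set `Ω` (with `0` in its interior)
satisfying `b₁‖x‖^a ≤ V x` on `Ω` and `D⁺V(x; g x) ≤ -b₂ V x` on `Ω° \ {0}`, and the sublevel
set `𝒜 = {x ∈ Ω | V x ≤ r}` is contained in `Ω°`, then any solution of `ẋ = g(x)` starting in
`𝒜°` stays in `𝒜` and satisfies `V(x(t)) ≤ V(x(t₀)) e^{-b₂ (t-t₀)}`. -/
theorem cpa_lyapunov_decay
    {n : ℕ} (hn : 1 ≤ n)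
    (Ω : Set (EuclideanSpace ℝ (Fin n))) (hΩcomp : IsCompact Ω) (hΩ0 : 0 ∈ interior Ω)
    (g : EuclideanSpace ℝ (Fin n) → EuclideanSpace ℝ (Fin n))
    (hg : ∃ K : NNReal, LipschitzOnWith K g Ω) (hg0 : g 0 = 0)
    (V : EuclideanSpace ℝ (Fin n) → ℝ)
    (hV : ∃ K : NNReal, LipschitzOnWith K V Ω) (hV0 : V 0 = 0)
    (a b₁ b₂ : ℝ) (ha : 0 < a) (hb₁ : 0 < b₁) (hb₂ : 0 < b₂)
    (hlow : ∀ x ∈ Ω, b₁ * ‖x‖ ^ a ≤ V x)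
    (hdec : ∀ x ∈ interior Ω, x ≠ 0 → diniDeriv V x (g x) ≤ -b₂ * V x)
    (r : ℝ) (hr : 0 < r)
    (A : Set (EuclideanSpace ℝ (Fin n))) (hA : A = {z ∈ Ω | V z ≤ r})
    (hAsub : A ⊆ interior Ω)
    (t₀ : ℝ) (x : ℝ → EuclideanSpace ℝ (Fin n))
    (hx : ∀ t, t₀ ≤ t → HasDerivAt x (g (x t)) t)
    (hx₀Ω : x t₀ ∈ Ω) (hx₀ : V (x t₀) < r) :
    ∀ t, t₀ ≤ t →
      x t ∈ A ∧ V (x t) ≤ V (x t₀) * Real.exp (-b₂ * (t - t₀)) := by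
  obtain ⟨Kv, hKv⟩ := hV
  set K : ℝ := (Kv : ℝ) + 1 with hKdef
  have hKpos : (0:ℝ) < K := by positivity
  have hVlip : ∀ p ∈ Ω, ∀ q ∈ Ω, V p - V q ≤ K * ‖p - q‖ := by
    intro p hp q hq
    have h1 := hKv.dist_le_mul p hp q hq
    rw [Real.dist_eq, dist_eq_norm] at h1
    have h2 : V p - V q ≤ |V p - V q| := le_abs_self _
    have h3 : (Kv : ℝ) * ‖p - q‖ ≤ K * ‖p - q‖ :=
      mul_le_mul_of_nonneg_right (by simp [hKdef]) (norm_nonneg _)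
    linarith
  have hVc : ContinuousOn V Ω := hKv.continuousOn
  have hxc : ∀ t, t₀ ≤ t → ContinuousAt x t := fun t ht => (hx t ht).continuousAt
  have hAclosed : IsClosed A := by
    rw [hA]
    have heq : {z ∈ Ω | V z ≤ r} = Ω ∩ V ⁻¹' Iic r := by ext z; simp [Set.mem_sep_iff]
    rw [heq]
    exact hVc.preimage_isClosed_of_isClosed hΩcomp.isClosed isClosed_Iic
  -- key slope estimate
  have hkey : ∀ s : ℝ, t₀ ≤ s → x s ∈ interior Ω → ∀ ρ : ℝ, -b₂ * V (x s) < ρ →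
      ∀ᶠ z in nhdsWithin s (Set.Ioi s), (z - s)⁻¹ * (V (x z) - V (x s)) < ρ := by
    intro s hs hsΩ ρ hρ
    have hder := hx s hs
    have hxz : ∀ᶠ z in nhds s, x z ∈ interior Ω :=
      (hder.continuousAt).eventually_mem (isOpen_interior.mem_nhds hsΩ)
    by_cases h0 : x s = 0
    · -- derivative is zero
      have hy0 : g (x s) = 0 := by rw [h0, hg0]
      have hρ0 : 0 < ρ := by
        have : V (x s) = 0 := by rw [h0, hV0]
        rw [this, mul_zero] at hρ; exact hρ
      have hder0 : HasDerivAt x 0 s := hy0 ▸ hder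
      have hlo := hasDerivAt_iff_isLittleO.mp hder0
      simp only [smul_zero, sub_zero] at hlo
      have hc : (0:ℝ) < ρ / (2 * K) := by positivity
      have hsmall := (Asymptotics.isLittleO_iff.mp hlo) hc
      filter_upwards [nhdsWithin_le_nhds hxz, nhdsWithin_le_nhds hsmall,
        self_mem_nhdsWithin] with z hz hsm (hzs : z ∈ Ioi s)
      have hzs' : 0 < z - s := sub_pos.mpr hzs
      have h1 : V (x z) - V (x s) ≤ K * ‖x z - x s‖ :=
        hVlip _ (interior_subset hz) _ (interior_subset hsΩ)
      have h2 : ‖x z - x s‖ ≤ ρ / (2 * K) * (z - s) := by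
        rwa [Real.norm_eq_abs, abs_of_pos hzs'] at hsm
      have h3 : (z - s)⁻¹ * (V (x z) - V (x s)) ≤ (z - s)⁻¹ * (K * (ρ / (2 * K) * (z - s))) := by
        apply mul_le_mul_of_nonneg_left _ (le_of_lt (inv_pos.mpr hzs'))
        exact le_trans h1 (mul_le_mul_of_nonneg_left h2 (le_of_lt hKpos))
      have h4 : (z - s)⁻¹ * (K * (ρ / (2 * K) * (z - s))) = ρ / 2 := by
        field_simp
      rw [h4] at h3
      linarith
    · have hdini := hdec (x s) hsΩ h0
      set p := x s with hp
      set y := g (x s) with hy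
      set ε : ℝ := (ρ - (-b₂ * V p)) / 2 with hεdef
      have hε : 0 < ε := by simp only [hεdef]; linarith
      -- membership of p + h • y
      have htend : Filter.Tendsto (fun h : ℝ => p + h • y) (nhds 0) (nhds p) := by
        have : Filter.Tendsto (fun h : ℝ => p + h • y) (nhds 0) (nhds (p + (0:ℝ) • y)) :=
          (tendsto_const_nhds.add ((continuous_id.smul continuous_const).tendsto 0))
        simpa using this
      have hmemΩ : ∀ᶠ h : ℝ in nhds 0, p + h • y ∈ interior Ω :=
        htend.eventually (isOpen_interior.eventually_mem hsΩ)
      -- boundedness of difference quotient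
      have hbdd : Filter.IsBoundedUnder (· ≤ ·) (nhdsWithin 0 (Set.Ioi 0))
          (fun h : ℝ => (V (p + h • y) - V p) / h) := by
        refine ⟨K * ‖y‖, eventually_map.mpr ?_⟩
        filter_upwards [nhdsWithin_le_nhds hmemΩ, self_mem_nhdsWithin] with h hm (hh : h ∈ Ioi 0)
        have hh' : (0:ℝ) < h := hh
        have h1 : V (p + h • y) - V p ≤ K * ‖h • y‖ := by
          have := hVlip _ (interior_subset hm) _ (interior_subset hsΩ)
          simpa using this
        rw [norm_smul, Real.norm_eq_abs, abs_of_pos hh'] at h1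
        rw [div_le_iff₀ hh']
        calc V (p + h • y) - V p ≤ K * (h * ‖y‖) := h1
          _ = K * ‖y‖ * h := by ring
      have hlim : Filter.limsup (fun h : ℝ => (V (p + h • y) - V p) / h)
          (nhdsWithin 0 (Set.Ioi 0)) < -b₂ * V p + ε := lt_of_le_of_lt hdini (by linarith)
      have h1 := Filter.eventually_lt_of_limsup_lt hlim hbdd
      -- transfer to 𝓝[>] s
      have hmap : Filter.Tendsto (fun z : ℝ => z - s) (nhdsWithin s (Set.Ioi s))
          (nhdsWithin 0 (Set.Ioi 0)) := by
        apply Filter.Tendsto.inf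
        · have : Filter.Tendsto (fun z : ℝ => z - s) (nhds s) (nhds (s - s)) :=
            (continuous_id.sub continuous_const).tendsto s
          simpa using this
        · intro u hu
          simp only [Filter.mem_map, Filter.mem_principal] at hu ⊢
          intro z hz
          exact hu (by simpa using sub_pos.mpr (show s < z from hz))
      have h1' := hmap.eventually h1
      have hmem' := hmap.eventually (nhdsWithin_le_nhds hmemΩ)
      -- error term
      have hlo := hasDerivAt_iff_isLittleO.mp hder
      have hc : (0:ℝ) < ε / K := by positivity
      have hsmall := (Asymptotics.isLittleO_iff.mp hlo) hc
      filter_upwards [nhdsWithin_le_nhds hxz, nhdsWithin_le_nhds hsmall, h1', hmem',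
        self_mem_nhdsWithin] with z hz hsm hq hm (hzs : z ∈ Ioi s)
      have hzs' : 0 < z - s := sub_pos.mpr hzs
      have herr : V (x z) - V (p + (z - s) • y) ≤ K * ‖x z - p - (z - s) • y‖ := by
        have := hVlip _ (interior_subset hz) _ (interior_subset hm)
        calc V (x z) - V (p + (z - s) • y) ≤ K * ‖x z - (p + (z - s) • y)‖ := this
          _ = K * ‖x z - p - (z - s) • y‖ := by rw [sub_add_eq_sub_sub]
      have herr2 : ‖x z - p - (z - s) • y‖ ≤ ε / K * (z - s) := by
        have : ‖x z - x s - (z - s) • y‖ ≤ ε / K * ‖z - s‖ := hsm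
        rwa [Real.norm_eq_abs, abs_of_pos hzs', ← hp] at this
      have hKerr : K * ‖x z - p - (z - s) • y‖ ≤ ε * (z - s) := by
        calc K * ‖x z - p - (z - s) • y‖ ≤ K * (ε / K * (z - s)) :=
              mul_le_mul_of_nonneg_left herr2 (le_of_lt hKpos)
          _ = ε * (z - s) := by field_simp
      have hsplit : (z - s)⁻¹ * (V (x z) - V p) =
          (z - s)⁻¹ * (V (x z) - V (p + (z - s) • y)) +
          (V (p + (z - s) • y) - V p) / (z - s) := by
        rw [div_eq_inv_mul]; ring
      rw [hsplit]
      have hA1 : (z - s)⁻¹ * (V (x z) - V (p + (z - s) • y)) ≤ ε := by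
        calc (z - s)⁻¹ * (V (x z) - V (p + (z - s) • y))
            ≤ (z - s)⁻¹ * (ε * (z - s)) :=
              mul_le_mul_of_nonneg_left (le_trans herr hKerr) (le_of_lt (inv_pos.mpr hzs'))
          _ = ε := by field_simp
      have hA2 : (V (p + (z - s) • y) - V p) / (z - s) < -b₂ * V p + ε := hq
      have : ρ = ε + (-b₂ * V p + ε) := by simp only [hεdef]; ring
      linarith
  -- Gronwall step
  have hgron : ∀ T, t₀ ≤ T → (∀ s ∈ Icc t₀ T, x s ∈ interior Ω) →
      ∀ u ∈ Icc t₀ T, V (x u) ≤ V (x t₀) * Real.exp (-b₂ * (u - t₀)) := by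
    intro T hT hmem u hu
    have hcont : ContinuousOn (fun s => V (x s)) (Icc t₀ T) := by
      apply ContinuousOn.comp hVc
      · exact fun s hs => ((hxc s hs.1)).continuousWithinAt
      · exact fun s hs => interior_subset (hmem s hs)
    have hres := le_gronwallBound_of_liminf_deriv_right_le
      (f := fun s => V (x s)) (f' := fun s => -b₂ * V (x s)) (δ := V (x t₀))
      (K := -b₂) (ε := 0) (a := t₀) (b := T) hcont
      (fun s hs ρ hρ => ((hkey s hs.1 (hmem s ⟨hs.1, le_of_lt hs.2⟩) ρ hρ).frequently))
      le_rfl (fun s hs => by simp) u hu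
    rwa [gronwallBound_ε0] at hres
  have hVt₀ : 0 ≤ V (x t₀) := le_trans (by positivity) (hlow _ hx₀Ω)
  intro t ht
  set S := {u : ℝ | u ∈ Icc t₀ t ∧ ∀ s ∈ Icc t₀ u, x s ∈ A} with hSdef
  have ht₀S : t₀ ∈ S := by
    refine ⟨⟨le_refl _, ht⟩, fun s hs => ?_⟩
    have : s = t₀ := le_antisymm hs.2 hs.1
    rw [this, hA]
    exact ⟨hx₀Ω, le_of_lt hx₀⟩
  have hSne : S.Nonempty := ⟨t₀, ht₀S⟩
  have hSbdd : BddAbove S := ⟨t, fun u hu => hu.1.2⟩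
  set c := sSup S with hcdef
  have hc1 : t₀ ≤ c := le_csSup hSbdd ht₀S
  have hc2 : c ≤ t := csSup_le hSne (fun u hu => hu.1.2)
  have hcS : ∀ s ∈ Icc t₀ c, x s ∈ A := by
    intro s hs
    rcases lt_or_eq_of_le hs.2 with h | h
    · obtain ⟨u, huS, hu⟩ := exists_lt_of_lt_csSup hSne h
      exact huS.2 s ⟨hs.1, le_of_lt hu⟩
    · have hclos : c ∈ closure S := csSup_mem_closure hSne hSbdd
      have hxS : x '' S ⊆ A := by
        rintro _ ⟨u, huS, rfl⟩
        exact huS.2 u ⟨huS.1.1, le_refl _⟩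
      have hcc := ((hxc c hc1).continuousWithinAt (s := S)).mem_closure_image hclos
      rw [h]
      exact hAclosed.closure_subset (closure_mono hxS hcc)
  have hceq : c = t := by
    by_contra hne
    have hclt : c < t := lt_of_le_of_ne hc2 hne
    have hAin : ∀ s ∈ Icc t₀ c, x s ∈ interior Ω := fun s hs => hAsub (hcS s hs)
    have hVcb : V (x c) < r := by
      have h1 := hgron c hc1 hAin c ⟨hc1, le_refl _⟩
      have h2 : Real.exp (-b₂ * (c - t₀)) ≤ 1 := by
        apply Real.exp_le_one_iff.mpr
        nlinarith
      nlinarith [Real.exp_pos (-b₂ * (c - t₀))]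
    have hxcΩ : x c ∈ interior Ω := hAin c ⟨hc1, le_refl _⟩
    have hV1 : ContinuousAt (fun u => V (x u)) c := by
      have hΩnhds : Ω ∈ nhds (x c) := mem_nhds_iff.mpr ⟨interior Ω, interior_subset,
        isOpen_interior, hxcΩ⟩
      exact (hVc.continuousAt hΩnhds).comp (hxc c hc1)
    have hev1 : ∀ᶠ u in nhds c, x u ∈ interior Ω :=
      (hxc c hc1).eventually_mem (isOpen_interior.mem_nhds hxcΩ)
    have hev2 : ∀ᶠ u in nhds c, V (x u) < r := hV1.eventually_lt_const hVcb
    obtain ⟨δ, hδ, hball⟩ := Metric.eventually_nhds_iff.mp (hev1.and hev2)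
    set c' := min (c + δ / 2) t with hc'def
    have hcc' : c < c' := lt_min (by linarith) hclt
    have hc't : c' ≤ t := min_le_right _ _
    have hc'S : c' ∈ S := by
      refine ⟨⟨le_trans hc1 (le_of_lt hcc'), hc't⟩, fun s hs => ?_⟩
      rcases le_or_gt s c with h | h
      · exact hcS s ⟨hs.1, h⟩
      · have hd : dist s c < δ := by
          rw [Real.dist_eq, abs_of_pos (sub_pos.mpr h)]
          have : s ≤ c + δ / 2 := le_trans hs.2 (min_le_left _ _)
          linarith
        obtain ⟨hm, hv⟩ := hball hd
        rw [hA]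
        exact ⟨interior_subset hm, le_of_lt hv⟩
    have := le_csSup hSbdd hc'S
    linarith [hcc']
  have hall : ∀ s ∈ Icc t₀ t, x s ∈ A := hceq ▸ hcS
  exact ⟨hall t ⟨ht, le_refl _⟩, hgron t ht (fun s hs => hAsub (hall s hs)) t ⟨ht, le_refl _⟩⟩
end

section
/- Let n ≥ 1, let V : ℝⁿ → ℝ be Lipschitz, and let x : ℝ → ℝⁿ be differentiable at t ∈ ℝ with derivative y = x′(t). Then limsup_{h→0⁺} (V(x(t + h)) − V(x(t)))/h = limsup_{h→0⁺} (V(x(t) + h·y) − V(x(t)))/h; that is, the upper right Dini derivative of t ↦ V(x(t)) at t equals the upper Dini derivative of V at x(t) in the direction x′(t). -/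
open Filter Set

lemma limsup_add_tendsto_zero {l : Filter ℝ} [l.NeBot] {g e : ℝ → ℝ}
    (hg_ub : IsBoundedUnder (· ≤ ·) l g) (hg_lb : IsBoundedUnder (· ≥ ·) l g)
    (he : Tendsto e l (nhds 0)) : limsup (g + e) l = limsup g l := by
  have he_ub : IsBoundedUnder (· ≤ ·) l e := he.isBoundedUnder_le
  have he_lb : IsBoundedUnder (· ≥ ·) l e := he.isBoundedUnder_ge
  have he_limsup : limsup e l = 0 := he.limsup_eq
  have hne_limsup : limsup (-e) l = 0 := by
    exact (by simpa using (he.neg).limsup_eq : limsup (fun x => -e x) l = 0)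
  apply le_antisymm
  · calc limsup (g + e) l ≤ limsup g l + limsup e l :=
          limsup_add_le hg_lb hg_ub he_lb.isCoboundedUnder_le he_ub
      _ = limsup g l := by rw [he_limsup, add_zero]
  · have hgeq : g = (g + e) + (-e) := by funext x; simp
    have h1 : IsBoundedUnder (· ≥ ·) l (g + e) := isBoundedUnder_ge_add hg_lb he_lb
    have h2 : IsBoundedUnder (· ≤ ·) l (g + e) := isBoundedUnder_le_add hg_ub he_ub
    have h3 : IsCoboundedUnder (· ≤ ·) l (-e) :=
      (he.neg.isBoundedUnder_ge).isCoboundedUnder_le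
    have h4 : IsBoundedUnder (· ≤ ·) l (-e) := he.neg.isBoundedUnder_le
    calc limsup g l = limsup ((g + e) + (-e)) l := by rw [← hgeq]
      _ ≤ limsup (g + e) l + limsup (-e) l := limsup_add_le h1 h2 h3 h4
      _ = limsup (g + e) l := by rw [hne_limsup, add_zero]

/-- For a (globally) Lipschitz `V : ℝⁿ → ℝ` and a curve `x` differentiable
at `t` with derivative `y = x'(t)`, the upper right Dini derivative of `t ↦ V(x(t))` at `t`
equals the upper Dini derivative of `V` at `x(t)` in the direction `y`. -/
theorem dini_chain_rule_lipschitz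
    {n : ℕ} (hn : 1 ≤ n)
    (V : EuclideanSpace ℝ (Fin n) → ℝ) (hV : ∃ K : NNReal, LipschitzWith K V)
    (x : ℝ → EuclideanSpace ℝ (Fin n)) (t : ℝ) (y : EuclideanSpace ℝ (Fin n))
    (hx : HasDerivAt x y t) :
    Filter.limsup (fun h : ℝ => (V (x (t + h)) - V (x t)) / h) (nhdsWithin 0 (Set.Ioi 0))
      = Filter.limsup (fun h : ℝ => (V (x t + h • y) - V (x t)) / h)
          (nhdsWithin 0 (Set.Ioi 0)) := by
  obtain ⟨K, hK⟩ := hV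
  set l := nhdsWithin (0:ℝ) (Set.Ioi 0) with hl
  haveI : l.NeBot := nhdsGT_neBot 0
  set g : ℝ → ℝ := fun h => (V (x t + h • y) - V (x t)) / h with hg
  set e : ℝ → ℝ := fun h => (V (x (t + h)) - V (x t + h • y)) / h with he
  have hfeq : (fun h : ℝ => (V (x (t + h)) - V (x t)) / h) = g + e := by
    funext h
    simp only [hg, he, Pi.add_apply]
    ring
  -- bound on g
  have hg_bound : ∀ᶠ h in l, |g h| ≤ (K : ℝ) * ‖y‖ := by
    filter_upwards [self_mem_nhdsWithin] with h (hh : (0:ℝ) < h)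
    have := hK.dist_le_mul (x t + h • y) (x t)
    rw [Real.dist_eq] at this
    have hd : dist (x t + h • y) (x t) = h * ‖y‖ := by
      rw [dist_eq_norm]
      simp [norm_smul, abs_of_pos hh]
    rw [hd] at this
    have h2 : |V (x t + h • y) - V (x t)| / h ≤ (K : ℝ) * (h * ‖y‖) / h := by
      gcongr
    calc |g h| = |V (x t + h • y) - V (x t)| / h := by
          rw [hg, abs_div, abs_of_pos hh]
      _ ≤ (K : ℝ) * (h * ‖y‖) / h := h2
      _ = (K : ℝ) * ‖y‖ := by field_simp
  have hg_ub : IsBoundedUnder (· ≤ ·) l g :=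
    ⟨(K : ℝ) * ‖y‖, hg_bound.mono fun h hh => le_of_abs_le hh⟩
  have hg_lb : IsBoundedUnder (· ≥ ·) l g :=
    ⟨-((K : ℝ) * ‖y‖), hg_bound.mono fun h hh => neg_le_of_abs_le hh⟩
  -- e tends to 0
  have hlittle : (fun h : ℝ => x (t + h) - x t - h • y) =o[nhds 0] fun h => h :=
    hasDerivAt_iff_isLittleO_nhds_zero.mp hx
  have hdiv : Tendsto (fun h : ℝ => ‖x (t + h) - x t - h • y‖ / ‖h‖) (nhds 0) (nhds 0) := by
    have := hlittle.norm_norm.tendsto_div_nhds_zero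
    simpa using this
  have hdiv' : Tendsto (fun h : ℝ => (K : ℝ) * (‖x (t + h) - x t - h • y‖ / ‖h‖)) l (nhds 0) := by
    have := (hdiv.const_mul (K : ℝ)).mono_left (nhdsWithin_le_nhds (s := Set.Ioi 0))
    simpa using this
  have he_tendsto : Tendsto e l (nhds 0) := by
    apply squeeze_zero_norm' _ hdiv'
    filter_upwards [self_mem_nhdsWithin] with h (hh : (0:ℝ) < h)
    have hle := hK.dist_le_mul (x (t + h)) (x t + h • y)
    rw [Real.dist_eq] at hle
    have hd : dist (x (t + h)) (x t + h • y) = ‖x (t + h) - x t - h • y‖ := by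
      rw [dist_eq_norm]
      congr 1
      abel
    rw [hd] at hle
    have : ‖e h‖ = |V (x (t + h)) - V (x t + h • y)| / h := by
      rw [he, Real.norm_eq_abs, abs_div, abs_of_pos hh]
    rw [this]
    calc |V (x (t + h)) - V (x t + h • y)| / h
        ≤ (K : ℝ) * ‖x (t + h) - x t - h • y‖ / h := by
          gcongr
      _ = (K : ℝ) * (‖x (t + h) - x t - h • y‖ / ‖h‖) := by
          rw [Real.norm_eq_abs, abs_of_pos hh]; ring
  rw [hfeq]
  exact limsup_add_tendsto_zero hg_ub hg_lb he_tendsto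
end

section
/- Let n ≥ 1, let V : ℝⁿ → ℝ and g : ℝⁿ → ℝⁿ be Lipschitz, let r ∈ ℝ, and let x : [t₀, ∞) → ℝⁿ be differentiable with x′(t) = g(x(t)) for all t ≥ t₀. Suppose V(x(t₀)) ≤ r, and suppose that for every z ∈ ℝⁿ with V(z) = r one has D⁺V(z; g(z)) < 0. Then V(x(t)) ≤ r for all t ≥ t₀; i.e., the sublevel set {z : V(z) ≤ r} is positively invariant along the trajectory. -/
open Filter Set
open Topology Asymptotics

lemma key {n : ℕ} (V : EuclideanSpace ℝ (Fin n) → ℝ) (K : NNReal) (hV : LipschitzWith K V)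
    (x : ℝ → EuclideanSpace ℝ (Fin n)) (s : ℝ) (v : EuclideanSpace ℝ (Fin n))
    (hx : HasDerivAt x v s) (hd : diniDeriv V (x s) v < 0) :
    ∀ᶠ h in 𝓝[>] (0:ℝ), V (x (s + h)) < V (x s) := by
  set z := x s with hz
  set d := diniDeriv V z v with hdd
  have hKpos : (0:ℝ) ≤ K := K.coe_nonneg
  -- boundedness of the difference quotient
  have hbdd : IsBoundedUnder (· ≤ ·) (𝓝[>] (0:ℝ))
      (fun h : ℝ => (V (z + h • v) - V z) / h) := by
    refine ⟨(K:ℝ) * ‖v‖, ?_⟩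
    rw [eventually_map]
    filter_upwards [self_mem_nhdsWithin] with h hh
    have h0 : (0:ℝ) < h := hh
    rw [div_le_iff₀ h0]
    calc V (z + h • v) - V z ≤ |V (z + h • v) - V z| := le_abs_self _
      _ ≤ (K:ℝ) * ‖z + h • v - z‖ := by
          simpa [Real.dist_eq, dist_eq_norm] using hV.dist_le_mul (z + h • v) z
      _ = (K:ℝ) * ‖v‖ * h := by
          rw [add_sub_cancel_left, norm_smul, Real.norm_eq_abs, abs_of_pos h0]; ring
  have hev1 : ∀ᶠ h in 𝓝[>] (0:ℝ), (V (z + h • v) - V z) / h < d / 2 :=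
    eventually_lt_of_limsup_lt (show Filter.limsup (fun h : ℝ => (V (z + h • v) - V z) / h) (𝓝[>] (0:ℝ)) < d/2 from by rw [show Filter.limsup (fun h : ℝ => (V (z + h • v) - V z) / h) (𝓝[>] (0:ℝ)) = d from rfl]; linarith) hbdd
  -- little-o from differentiability
  set ε : ℝ := -d / (4 * ((K:ℝ) + 1)) with hε
  have hεpos : 0 < ε := by
    apply div_pos (by linarith) (by positivity)
  have hlo := hasDerivAt_iff_isLittleO.mp hx
  have hmap : Tendsto (fun h : ℝ => s + h) (𝓝 (0:ℝ)) (𝓝 s) := by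
    simpa using (continuous_add_left s).tendsto (0:ℝ)
  have hev2 : ∀ᶠ h in 𝓝 (0:ℝ), ‖x (s + h) - z - h • v‖ ≤ ε * ‖h‖ := by
    have := hmap.eventually (hlo.def hεpos)
    filter_upwards [this] with h hh
    simpa using hh
  have hev2' : ∀ᶠ h in 𝓝[>] (0:ℝ), ‖x (s + h) - z - h • v‖ ≤ ε * ‖h‖ :=
    nhdsWithin_le_nhds hev2
  filter_upwards [hev1, hev2', self_mem_nhdsWithin] with h h1 h2 h3
  have h0 : (0:ℝ) < h := h3
  have hq : V (z + h • v) - V z < h * (d / 2) := by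
    rw [div_lt_iff₀ h0] at h1; linarith [h1]
  have hnorm : ‖x (s + h) - (z + h • v)‖ ≤ ε * h := by
    have : x (s + h) - (z + h • v) = x (s + h) - z - h • v := by abel
    rw [this]
    simpa [Real.norm_eq_abs, abs_of_pos h0] using h2
  have hlip : V (x (s + h)) - V (z + h • v) ≤ (K:ℝ) * (ε * h) := by
    calc V (x (s + h)) - V (z + h • v) ≤ |V (x (s + h)) - V (z + h • v)| := le_abs_self _
      _ ≤ (K:ℝ) * ‖x (s + h) - (z + h • v)‖ := by
          simpa [Real.dist_eq, dist_eq_norm] using hV.dist_le_mul (x (s + h)) (z + h • v)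
      _ ≤ (K:ℝ) * (ε * h) := by
          exact mul_le_mul_of_nonneg_left hnorm hKpos
  have hKε : (K:ℝ) * ε ≤ -d / 4 := by
    have : (K:ℝ) * ε ≤ ((K:ℝ) + 1) * ε := by nlinarith
    calc (K:ℝ) * ε ≤ ((K:ℝ) + 1) * ε := this
      _ = -d / 4 := by rw [hε]; field_simp
  have hd2 : d < 0 := hd
  nlinarith [hlip, hq, hKε, h0]

/-- positive invariance of sublevel sets. If `V` and `g` are Lipschitz,
`V(x(t₀)) ≤ r`, the trajectory solves `ẋ = g(x)` for `t ≥ t₀`, and `D⁺V(z; g z) < 0`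
whenever `V z = r`, then `V(x(t)) ≤ r` for all `t ≥ t₀`. -/
theorem sublevel_positively_invariant
    {n : ℕ} (hn : 1 ≤ n)
    (V : EuclideanSpace ℝ (Fin n) → ℝ) (hV : ∃ K : NNReal, LipschitzWith K V)
    (g : EuclideanSpace ℝ (Fin n) → EuclideanSpace ℝ (Fin n))
    (hg : ∃ K : NNReal, LipschitzWith K g)
    (r t₀ : ℝ) (x : ℝ → EuclideanSpace ℝ (Fin n))
    (hx : ∀ t, t₀ ≤ t → HasDerivAt x (g (x t)) t)
    (hx₀ : V (x t₀) ≤ r)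
    (hbdry : ∀ z : EuclideanSpace ℝ (Fin n), V z = r → diniDeriv V z (g z) < 0) :
    ∀ t, t₀ ≤ t → V (x t) ≤ r := by
  obtain ⟨K, hVK⟩ := hV
  by_contra hcon
  push_neg at hcon
  obtain ⟨t, ht₀, ht⟩ := hcon
  set f : ℝ → ℝ := fun u => V (x u) with hf
  set S : Set ℝ := {u | u ∈ Icc t₀ t ∧ f u ≤ r} with hS
  have hne : t₀ ∈ S := ⟨⟨le_refl _, ht₀⟩, hx₀⟩
  have hSbdd : BddAbove S := ⟨t, fun u hu => hu.1.2⟩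
  set s := sSup S with hs
  have hs₀ : t₀ ≤ s := le_csSup hSbdd hne
  have hst : s ≤ t := csSup_le ⟨t₀, hne⟩ fun u hu => hu.1.2
  have hcont : ∀ u, t₀ ≤ u → ContinuousAt f u := fun u hu =>
    hVK.continuous.continuousAt.comp (hx u hu).continuousAt
  have hsc : s ∈ closure S := csSup_mem_closure ⟨t₀, hne⟩ hSbdd
  haveI : (𝓝[S] s).NeBot := mem_closure_iff_nhdsWithin_neBot.mp hsc
  have hfs_le : f s ≤ r := by
    have htd : Tendsto f (𝓝[S] s) (𝓝 (f s)) := (hcont s hs₀).continuousWithinAt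
    exact le_of_tendsto htd ((eventually_mem_nhdsWithin).mono fun u hu => hu.2)
  have hfsr : f s = r := by
    rcases lt_or_eq_of_le hfs_le with hlt | heq
    · exfalso
      have hstlt : s < t := lt_of_le_of_ne hst (fun hq => absurd ht (not_lt.mpr (hq ▸ hfs_le)))
      have hev : ∀ᶠ u in 𝓝 s, f u < r := (hcont s hs₀) (Iio_mem_nhds hlt)
      have hev' : ∀ᶠ u in 𝓝[>] s, f u < r := nhdsWithin_le_nhds hev
      have hIoc : Ioc s t ∈ 𝓝[>] s := Ioc_mem_nhdsGT_of_mem ⟨le_refl s, hstlt⟩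
      obtain ⟨u, hu1, hu2⟩ := (hev'.and hIoc).exists
      have huS : u ∈ S := ⟨⟨le_trans hs₀ hu2.1.le, hu2.2⟩, hu1.le⟩
      exact absurd (le_csSup hSbdd huS) (not_le.mpr hu2.1)
    · exact heq
  have hstlt : s < t := lt_of_le_of_ne hst (fun hq => absurd ht (not_lt.mpr (hq ▸ hfsr.le)))
  have hdini : diniDeriv V (x s) (g (x s)) < 0 := hbdry (x s) hfsr
  have hkey := key V K hVK x s (g (x s)) (hx s hs₀) hdini
  have hIoo : Ioo (0:ℝ) (t - s) ∈ 𝓝[>] (0:ℝ) :=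
    Ioo_mem_nhdsGT_of_mem ⟨le_refl _, by linarith⟩
  obtain ⟨h, hk, hm⟩ := (hkey.and hIoo).exists
  have hmem : s + h ∈ S := by
    refine ⟨⟨by linarith [hm.1], by linarith [hm.2]⟩, ?_⟩
    have : f (s + h) < r := by rw [← hfsr]; exact hk
    exact this.le
  have := le_csSup hSbdd hmem
  linarith [hm.1]
end

section
/- Let n ≥ 1, let C₁, …, C_m be finitely many closed convex subsets of ℝⁿ, let x, y ∈ ℝⁿ, and let ε > 0. If the segment {x + h·y : 0 ≤ h ≤ ε} is contained in C₁ ∪ ⋯ ∪ C_m, then there exist an index i and a number h₀ > 0 such that x + h·y ∈ C_i for all h with 0 ≤ h ≤ h₀ (in particular, the segment from x to x + h₀·y lies entirely in the single set C_i). -/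
open Set

/-- If a segment `{x + h•y : 0 ≤ h ≤ ε}` lies in a finite union of closed
convex sets `C₁, …, C_m`, then some initial subsegment `{x + h•y : 0 ≤ h ≤ h₀}` (with `h₀ > 0`)
lies entirely in a single set `C i`. -/
theorem segment_in_union_of_closed_convex
    {n m : ℕ} (hn : 1 ≤ n)
    (C : Fin m → Set (EuclideanSpace ℝ (Fin n)))
    (hclosed : ∀ i, IsClosed (C i)) (hconv : ∀ i, Convex ℝ (C i))
    (x y : EuclideanSpace ℝ (Fin n)) (ε : ℝ) (hε : 0 < ε)
    (hseg : ∀ h : ℝ, 0 ≤ h → h ≤ ε → x + h • y ∈ ⋃ i, C i) :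
    ∃ i : Fin m, ∃ h₀ : ℝ, 0 < h₀ ∧ ∀ h : ℝ, 0 ≤ h → h ≤ h₀ → x + h • y ∈ C i := by
  -- the sequence of parameters tending to 0
  have hmem : ∀ k : ℕ, x + (ε / (k + 1)) • y ∈ ⋃ i, C i := by
    intro k
    apply hseg
    · positivity
    · rw [div_le_iff₀ (by positivity)]
      nlinarith [Nat.cast_nonneg (α := ℝ) k]
  choose f hf using fun k => Set.mem_iUnion.mp (hmem k)
  -- pigeonhole: some fiber is infinite
  obtain ⟨i, hi⟩ := Finite.exists_infinite_fiber f
  rw [Set.infinite_coe_iff] at hi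
  have hfreq : ∃ᶠ k in Filter.atTop, f k = i := by
    rw [Nat.frequently_atTop_iff_infinite]
    exact hi.mono (fun k hk => hk)
  -- the sequence tends to x
  have htend : Filter.Tendsto (fun k : ℕ => x + (ε / (k + 1)) • y)
      Filter.atTop (nhds x) := by
    have h0 : Filter.Tendsto (fun k : ℕ => ε / (k + 1)) Filter.atTop (nhds 0) := by
      have := (tendsto_const_div_atTop_nhds_zero_nat ε).comp
        (Filter.tendsto_add_atTop_nat 1)
      exact this.congr fun k => by simp [Function.comp]
    have := Filter.Tendsto.smul h0 (tendsto_const_nhds (x := y) (f := Filter.atTop))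
    simpa using tendsto_const_nhds.add this
  -- x ∈ C i by closedness
  have hx : x ∈ C i := by
    refine (hclosed i).mem_of_frequently_of_tendsto ?_ htend
    exact hfreq.mono (fun k hk => hk ▸ hf k)
  -- pick one k with f k = i
  obtain ⟨k, hk⟩ := hfreq.exists
  refine ⟨i, ε / (k + 1), by positivity, fun h hh0 hh1 => ?_⟩
  set h₀ : ℝ := ε / (k + 1) with hh₀
  have hne : h₀ ≠ 0 := by positivity
  have hx1 : x + h₀ • y ∈ C i := hk ▸ hf k
  have := (hconv i).add_smul_mem hx (by simpa using hx1) (t := h / h₀)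
    ⟨div_nonneg hh0 (by positivity), div_le_one_of_le₀ hh1 (by positivity)⟩
  rwa [smul_smul, div_mul_cancel₀ _ hne] at this
end

section
/- Let n ≥ 1, let x₀, x₁, …, x_n ∈ ℝⁿ, let σ be the convex hull of {x₀, …, x_n}, and let g : ℝⁿ → ℝ be twice continuously differentiable on an open set containing σ. Suppose β ≥ 0 satisfies |∂²g/∂x⁽q⁾∂x⁽r⁾(ξ)| ≤ β for all ξ ∈ σ and all q, r ∈ {1, …, n}. Let α₀, …, α_n ≥ 0 with α₀ + ⋯ + α_n = 1 and set x = Σ_{j=0}^n α_j x_j. Then |g(x) − Σ_{j=0}^n α_j g(x_j)| ≤ β · Σ_{j=0}^n α_j c_j, where c_j = (n/2)·‖x_j − x₀‖·(max_{k∈{1,…,n}} ‖x_k − x₀‖ + ‖x_j − x₀‖) for j ≥ 1 and c₀ = 0. -/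
open Set

lemma aux_bilin {n : ℕ} (hn : 0 < n)
    (B : EuclideanSpace ℝ (Fin n) →L[ℝ] EuclideanSpace ℝ (Fin n) →L[ℝ] ℝ)
    {β : ℝ} (hB : ∀ q r : Fin n, |B (EuclideanSpace.single q 1) (EuclideanSpace.single r 1)| ≤ β)
    (v : EuclideanSpace ℝ (Fin n)) : |B v v| ≤ β * n * ‖v‖ ^ 2 := by
  have hβ0 : 0 ≤ β := le_trans (abs_nonneg _) (hB ⟨0, hn⟩ ⟨0, hn⟩)
  have hv : v = ∑ q, v q • EuclideanSpace.single q 1 := by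
    have := (EuclideanSpace.basisFun (Fin n) ℝ).sum_repr v
    simpa [EuclideanSpace.basisFun_apply, EuclideanSpace.basisFun_repr] using this.symm
  have hrow : ∀ q : Fin n, B (EuclideanSpace.single q 1) v
      = ∑ r, v r * B (EuclideanSpace.single q 1) (EuclideanSpace.single r 1) := by
    intro q
    conv_lhs => rw [hv]
    rw [map_sum]
    simp only [map_smul, smul_eq_mul]
  have h1 : B v = ∑ q, v q • B (EuclideanSpace.single q 1) := by
    conv_lhs => rw [hv]
    rw [map_sum]
    simp only [map_smul]
  have hBvv : B v v = ∑ q, ∑ r, v q * (v r * B (EuclideanSpace.single q 1) (EuclideanSpace.single r 1)) := by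
    rw [h1]
    simp only [ContinuousLinearMap.coe_sum', Finset.sum_apply,
      ContinuousLinearMap.coe_smul', Pi.smul_apply, smul_eq_mul]
    exact Finset.sum_congr rfl fun q _ => by rw [hrow q, Finset.mul_sum]
  have habs : |B v v| ≤ β * (∑ q, |v q|) ^ 2 := by
    rw [hBvv]
    calc |∑ q, ∑ r, v q * (v r * B (EuclideanSpace.single q 1) (EuclideanSpace.single r 1))|
        ≤ ∑ q, ∑ r, |v q * (v r * B (EuclideanSpace.single q 1) (EuclideanSpace.single r 1))| := by
          refine (Finset.abs_sum_le_sum_abs _ _).trans ?_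
          exact Finset.sum_le_sum fun q _ => Finset.abs_sum_le_sum_abs _ _
      _ ≤ ∑ q, ∑ r, |v q| * (|v r| * β) := by
          refine Finset.sum_le_sum fun q _ => Finset.sum_le_sum fun r _ => ?_
          rw [abs_mul, abs_mul]
          exact mul_le_mul_of_nonneg_left
            (mul_le_mul_of_nonneg_left (hB q r) (abs_nonneg _)) (abs_nonneg _)
      _ = β * (∑ q, |v q|) ^ 2 := by rw [sq, Finset.sum_mul_sum, Finset.mul_sum]; congr 1; ext q; rw [Finset.mul_sum]; congr 1; ext r; ring
  refine habs.trans ?_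
  have hcs : (∑ q, |v q|) ^ 2 ≤ (n : ℝ) * ∑ q, v q ^ 2 := by
    simpa [sq_abs] using sq_sum_le_card_mul_sum_sq (s := Finset.univ) (f := fun q : Fin n => |v q|)
  have hnorm : ‖v‖ ^ 2 = ∑ q, v q ^ 2 := by
    rw [EuclideanSpace.norm_eq, Real.sq_sqrt]
    · simp [sq_abs]
    · positivity
  rw [hnorm, mul_assoc]
  exact mul_le_mul_of_nonneg_left hcs hβ0

lemma aux_taylor1d {f : ℝ → ℝ} {s : Set ℝ} (hs : IsOpen s) (hsub : Icc (0:ℝ) 1 ⊆ s)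
    (hf : ContDiffOn ℝ 2 f s) {C : ℝ}
    (hC : ∀ t ∈ Ioo (0:ℝ) 1, |deriv (deriv f) t| ≤ C) :
    |f 1 - f 0 - deriv f 0| ≤ C / 2 := by
  have h01 : (0:ℝ) < 1 := one_pos
  have hud : UniqueDiffOn ℝ (Icc (0:ℝ) 1) := uniqueDiffOn_Icc h01
  have hf' : ContDiffOn ℝ 1 (deriv f) s := hf.deriv_of_isOpen hs (by norm_num)
  have hdiff : ∀ t ∈ s, DifferentiableAt ℝ f t := fun t ht =>
    (hf.contDiffAt (hs.mem_nhds ht)).differentiableAt (by norm_num)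
  have hdiff' : ∀ t ∈ s, DifferentiableAt ℝ (deriv f) t := fun t ht =>
    (hf'.contDiffAt (hs.mem_nhds ht)).differentiableAt one_ne_zero
  -- iterated derivatives within Icc agree with deriv
  have heq1 : EqOn (iteratedDerivWithin 1 f (Icc 0 1)) (deriv f) (Icc (0:ℝ) 1) := by
    intro t ht
    rw [iteratedDerivWithin_one]
    exact (hdiff t (hsub ht)).derivWithin (hud t ht)
  have hfIcc : ContDiffOn ℝ 1 f (Icc (0:ℝ) 1) := (hf.of_le (by norm_num)).mono hsub
  have hdOn : DifferentiableOn ℝ (iteratedDerivWithin 1 f (Icc 0 1)) (Ioo (0:ℝ) 1) := by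
    refine (DifferentiableOn.congr ?_ (fun t ht => heq1 (Ioo_subset_Icc_self ht)))
    exact fun t ht => (hdiff' t (hsub (Ioo_subset_Icc_self ht))).differentiableWithinAt
  obtain ⟨x', hx', hrem⟩ := taylor_mean_remainder_lagrange (n := 1) h01.ne
    (by rw [uIcc_of_le h01.le]; exact hfIcc) (by rw [uIcc_of_le h01.le, uIoo_of_le h01.le]; exact hdOn)
  rw [uIcc_of_le h01.le] at hrem
  rw [uIoo_of_le h01.le] at hx'
  have htay : taylorWithinEval f 1 (Icc (0:ℝ) 1) 0 1 = f 0 + deriv f 0 := by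
    rw [taylorWithinEval_succ, taylor_within_zero_eval]
    simp [heq1 (left_mem_Icc.2 h01.le)]
  have hit2 : iteratedDerivWithin 2 f (Icc (0:ℝ) 1) x' = deriv (deriv f) x' := by
    have hx'Icc : x' ∈ Icc (0:ℝ) 1 := Ioo_subset_Icc_self hx'
    rw [show (2:ℕ) = 1 + 1 from rfl, iteratedDerivWithin_succ]
    rw [derivWithin_congr heq1 (heq1 hx'Icc)]
    exact (hdiff' x' (hsub hx'Icc)).derivWithin (hud x' hx'Icc)
  rw [htay] at hrem
  have : f 1 - f 0 - deriv f 0 = deriv (deriv f) x' / 2 := by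
    rw [show f 1 - f 0 - deriv f 0 = f 1 - (f 0 + deriv f 0) by ring, hrem, hit2]
    norm_num
  rw [this, abs_div]
  rw [show |(2:ℝ)| = 2 by norm_num]
  gcongr
  exact hC x' hx'
lemma aux_taylor_vec {E : Type*} [NormedAddCommGroup E] [NormedSpace ℝ E]
    {U : Set E} (hU : IsOpen U) {g : E → ℝ} (hg : ContDiffOn ℝ 2 g U)
    {x₀ y : E} (hseg : segment ℝ x₀ y ⊆ U) {C : ℝ}
    (hC : ∀ ξ ∈ segment ℝ x₀ y, |fderiv ℝ (fderiv ℝ g) ξ (y - x₀) (y - x₀)| ≤ C) :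
    |g y - g x₀ - fderiv ℝ g x₀ (y - x₀)| ≤ C / 2 := by
  set v := y - x₀ with hv
  set ℓ : ℝ → E := fun t => x₀ + t • v with hℓdef
  set s : Set ℝ := ℓ ⁻¹' U with hsdef
  have hℓc : ContDiff ℝ 2 ℓ := contDiff_const.add (contDiff_id.smul contDiff_const)
  have hso : IsOpen s := hU.preimage hℓc.continuous
  have hIccseg : ∀ t ∈ Icc (0:ℝ) 1, ℓ t ∈ segment ℝ x₀ y := by
    intro t ht
    rw [segment_eq_image']
    exact ⟨t, ht, rfl⟩
  have hIcc : Icc (0:ℝ) 1 ⊆ s := fun t ht => hseg (hIccseg t ht)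
  have hfC : ContDiffOn ℝ 2 (g ∘ ℓ) s :=
    hg.comp (hℓc.contDiffOn) (Set.mapsTo_preimage ℓ U)
  have hdiffg : ∀ z ∈ U, DifferentiableAt ℝ g z := fun z hz =>
    (hg.contDiffAt (hU.mem_nhds hz)).differentiableAt (by norm_num)
  have hdiffg' : ∀ z ∈ U, DifferentiableAt ℝ (fderiv ℝ g) z := fun z hz =>
    ((hg.contDiffAt (hU.mem_nhds hz)).fderiv_right (m := 1) (le_refl 2)).differentiableAt one_ne_zero
  have hℓd : ∀ t : ℝ, HasDerivAt ℓ v t := fun t => by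
    have := ((hasDerivAt_id t).smul_const v).const_add x₀; rwa [one_smul] at this
  have hfd : ∀ t ∈ s, HasDerivAt (g ∘ ℓ) (fderiv ℝ g (ℓ t) v) t := fun t ht =>
    ((hdiffg (ℓ t) ht).hasFDerivAt).comp_hasDerivAt t (hℓd t)
  have hderiv : EqOn (deriv (g ∘ ℓ)) (fun t => fderiv ℝ g (ℓ t) v) s :=
    fun t ht => (hfd t ht).deriv
  have hderiv2 : ∀ t ∈ s, deriv (deriv (g ∘ ℓ)) t = fderiv ℝ (fderiv ℝ g) (ℓ t) v v := by
    intro t ht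
    have hev : deriv (g ∘ ℓ) =ᶠ[nhds t] fun t => fderiv ℝ g (ℓ t) v :=
      Filter.eventuallyEq_of_mem (hso.mem_nhds ht) hderiv
    rw [hev.deriv_eq]
    have hu : HasDerivAt (fun t => fderiv ℝ g (ℓ t)) (fderiv ℝ (fderiv ℝ g) (ℓ t) v) t :=
      ((hdiffg' (ℓ t) ht).hasFDerivAt).comp_hasDerivAt t (hℓd t)
    have := ((ContinuousLinearMap.apply ℝ ℝ v).hasFDerivAt).comp_hasDerivAt t hu
    exact this.deriv
  have hC' : ∀ t ∈ Ioo (0:ℝ) 1, |deriv (deriv (g ∘ ℓ)) t| ≤ C := by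
    intro t ht
    rw [hderiv2 t (hIcc (Ioo_subset_Icc_self ht))]
    exact hC (ℓ t) (hIccseg t (Ioo_subset_Icc_self ht))
  have := aux_taylor1d hso hIcc hfC hC'
  have h0 : (0:ℝ) ∈ s := hIcc (left_mem_Icc.2 zero_le_one)
  have hd0 : deriv (g ∘ ℓ) 0 = fderiv ℝ g x₀ v := by
    rw [hderiv h0]; simp [hℓdef]
  have hl1 : ℓ 1 = y := by simp [hℓdef, hv]
  have hl0 : ℓ 0 = x₀ := by simp [hℓdef]
  simpa [Function.comp, hl1, hl0, hd0] using this

/-- Taylor-type interpolation error bound on a simplex. If all second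
partial derivatives of `g` are bounded by `β` on the convex hull `σ` of `x₀, …, x_n`, then
the value of `g` at a convex combination `x = Σ αⱼ xⱼ` differs from the corresponding convex
combination of vertex values by at most `β Σ αⱼ cⱼ`. -/
theorem cpa_interpolation_error_bound
    {n : ℕ} (hn : 1 ≤ n) (p : Fin (n + 1) → EuclideanSpace ℝ (Fin n))
    (U : Set (EuclideanSpace ℝ (Fin n))) (hU : IsOpen U)
    (hσU : convexHull ℝ (Set.range p) ⊆ U)
    (g : EuclideanSpace ℝ (Fin n) → ℝ) (hg : ContDiffOn ℝ 2 g U)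
    (β : ℝ)
    (hβ : ∀ ξ ∈ convexHull ℝ (Set.range p), ∀ q r : Fin n,
      |iteratedFDeriv ℝ 2 g ξ ![EuclideanSpace.single q 1, EuclideanSpace.single r 1]| ≤ β)
    (α : Fin (n + 1) → ℝ) (hα : ∀ j, 0 ≤ α j) (hαsum : ∑ j, α j = 1)
    (x : EuclideanSpace ℝ (Fin n)) (hx : x = ∑ j, α j • p j)
    (c : Fin (n + 1) → ℝ) (hc0 : c 0 = 0)
    (hc : ∀ j : Fin (n + 1), j ≠ 0 →
      c j = ((n : ℝ) / 2) * ‖p j - p 0‖ *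
        ((⨆ k : Fin n, ‖p k.succ - p 0‖) + ‖p j - p 0‖)) :
    |g x - ∑ j, α j * g (p j)| ≤ β * ∑ j, α j * c j := by
  have hn0 : 0 < n := hn
  set σ := convexHull ℝ (Set.range p) with hσdef
  have hσconv : Convex ℝ σ := convex_convexHull ℝ _
  have hpmem : ∀ j, p j ∈ σ := fun j => subset_convexHull ℝ _ ⟨j, rfl⟩
  have hxσ : x ∈ σ := by
    rw [hx]
    exact hσconv.sum_mem (fun j _ => hα j) hαsum (fun j _ => hpmem j)
  have hβ0 : 0 ≤ β := le_trans (abs_nonneg _) (hβ (p 0) (hpmem 0) ⟨0, hn0⟩ ⟨0, hn0⟩)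
  -- second-derivative quadratic form bound
  have hBB : ∀ ξ ∈ σ, ∀ v : EuclideanSpace ℝ (Fin n),
      |fderiv ℝ (fderiv ℝ g) ξ v v| ≤ β * n * ‖v‖ ^ 2 := by
    intro ξ hξ v
    refine aux_bilin hn0 _ (fun q r => ?_) v
    simpa [iteratedFDeriv_two_apply] using hβ ξ hξ q r
  set D := fderiv ℝ g (p 0) with hD
  set w : Fin (n + 1) → ℝ := fun j => ‖p j - p 0‖ with hw
  -- Taylor remainder bound at each point of σ
  have hR : ∀ y ∈ σ, |g y - g (p 0) - D (y - p 0)| ≤ β * n * ‖y - p 0‖ ^ 2 / 2 := by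
    intro y hy
    have hseg : segment ℝ (p 0) y ⊆ U := (hσconv.segment_subset (hpmem 0) hy).trans hσU
    exact aux_taylor_vec hU hg hseg
      (fun ξ hξ => hBB ξ (hσconv.segment_subset (hpmem 0) hy hξ) (y - p 0))
  set M := ⨆ k : Fin n, ‖p k.succ - p 0‖ with hM
  have : Nonempty (Fin n) := ⟨⟨0, hn0⟩⟩
  have hbdd : BddAbove (Set.range fun k : Fin n => ‖p k.succ - p 0‖) :=
    Set.Finite.bddAbove (Set.finite_range _)
  have hwM : ∀ j, w j ≤ M := by
    intro j
    rcases eq_or_ne j 0 with hj | hj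
    · have : w j = 0 := by simp [hw, hj]
      rw [this]
      exact le_trans (norm_nonneg _) (le_ciSup hbdd ⟨0, hn0⟩)
    · obtain ⟨k, hk⟩ := Fin.exists_succ_eq.mpr hj
      rw [hw, ← hk]
      exact le_ciSup hbdd k
  have hM0 : 0 ≤ M := le_trans (norm_nonneg _) (le_ciSup hbdd ⟨0, hn0⟩)
  set S := ∑ j, α j * w j with hS
  have hS0 : 0 ≤ S := Finset.sum_nonneg fun j _ => mul_nonneg (hα j) (norm_nonneg _)
  have hxsub : x - p 0 = ∑ j, α j • (p j - p 0) := by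
    rw [hx]
    simp only [smul_sub, Finset.sum_sub_distrib, ← Finset.sum_smul, hαsum, one_smul]
  have hxS : ‖x - p 0‖ ≤ S := by
    rw [hxsub, hS]
    refine (norm_sum_le _ _).trans (Finset.sum_le_sum fun j _ => ?_)
    rw [norm_smul, Real.norm_eq_abs, abs_of_nonneg (hα j)]
  have hSM : S ≤ M := by
    calc S ≤ ∑ j, α j * M := Finset.sum_le_sum fun j _ =>
          mul_le_mul_of_nonneg_left (hwM j) (hα j)
      _ = M := by rw [← Finset.sum_mul, hαsum, one_mul]
  have hxsq : ‖x - p 0‖ ^ 2 ≤ S * M := by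
    rw [sq]
    exact mul_le_mul (hxS) ((hxS).trans hSM) (norm_nonneg _) hS0
  -- key algebraic identity
  have h1 : D (x - p 0) = ∑ j, α j * D (p j - p 0) := by
    rw [hxsub, map_sum]
    simp only [map_smul, smul_eq_mul]
  have key : g x - ∑ j, α j * g (p j) =
      (g x - g (p 0) - D (x - p 0)) - ∑ j, α j * (g (p j) - g (p 0) - D (p j - p 0)) := by
    have h2 : ∑ j, α j * (g (p j) - g (p 0) - D (p j - p 0)) =
        (∑ j, α j * g (p j)) - g (p 0) - ∑ j, α j * D (p j - p 0) := by
      simp only [mul_sub]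
      rw [Finset.sum_sub_distrib, Finset.sum_sub_distrib, ← Finset.sum_mul, hαsum, one_mul]
    rw [h1, h2]
    ring
  -- rewrite the RHS
  have hcw : ∀ j, c j = (n : ℝ) / 2 * (w j * (M + w j)) := by
    intro j
    rcases eq_or_ne j 0 with hj | hj
    · rw [hj, hc0]
      simp [hw]
    · rw [hc j hj, hw]
      ring
  have hRHS : β * ∑ j, α j * c j = β * n / 2 * (S * M) + ∑ j, α j * (β * n * w j ^ 2 / 2) := by
    rw [show ∑ j, α j * c j = ∑ j, α j * ((n : ℝ) / 2 * (w j * (M + w j))) from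
      Finset.sum_congr rfl fun j _ => by rw [hcw j]]
    rw [Finset.mul_sum, hS, Finset.sum_mul, Finset.mul_sum, ← Finset.sum_add_distrib]
    exact Finset.sum_congr rfl fun j _ => by ring
  rw [key, hRHS]
  refine (abs_sub _ _).trans ?_
  refine add_le_add ?_ ?_
  · calc |g x - g (p 0) - D (x - p 0)| ≤ β * n * ‖x - p 0‖ ^ 2 / 2 := hR x hxσ
      _ = β * n / 2 * ‖x - p 0‖ ^ 2 := by ring
      _ ≤ β * n / 2 * (S * M) := by
          apply mul_le_mul_of_nonneg_left hxsq
          positivity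
  · refine (Finset.abs_sum_le_sum_abs _ _).trans (Finset.sum_le_sum fun j _ => ?_)
    rw [abs_mul, abs_of_nonneg (hα j)]
    exact mul_le_mul_of_nonneg_left (hR (p j) (hpmem j)) (hα j)
end

section
/- Let n ≥ 1, let x₀, x₁, …, x_n ∈ ℝⁿ, let σ be the convex hull of {x₀, …, x_n}, and let g : ℝⁿ → ℝⁿ be twice continuously differentiable on an open set containing σ with |∂²g⁽p⁾/∂x⁽q⁾∂x⁽r⁾(ξ)| ≤ β for all ξ ∈ σ and all p, q, r ∈ {1, …, n}. Let W : ℝⁿ → ℝ satisfy W(z) = ⟨∇W, z⟩ + ω for all z ∈ σ, where ∇W ∈ ℝⁿ and ω ∈ ℝ, and let l ∈ ℝⁿ satisfy |∇W⁽k⁾| ≤ l⁽k⁾ for every k. Let α₀, …, α_n ≥ 0 with Σ_j α_j = 1, set x = Σ_{j=0}^n α_j x_j, and suppose there exists h₀ > 0 such that x + h·g(x) ∈ σ for all h ∈ [0, h₀]. Then limsup_{h→0⁺} (W(x + h·g(x)) − W(x))/h ≤ Σ_{j=0}^n α_j (⟨g(x_j), ∇W⟩ + c_j·β·(Σ_{k=1}^n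 l⁽k⁾)), where c_j = (n/2)·‖x_j − x₀‖·(max_{k∈{1,…,n}} ‖x_k − x₀‖ + ‖x_j − x₀‖) for j ≥ 1 and c₀ = 0. -/
open Set Filter RealInnerProductSpace

theorem aux_taylor1d_s9 {φ φ₁ φ₂ : ℝ → ℝ} {K : ℝ}
    (h1 : ∀ t ∈ Set.Icc (0:ℝ) 1, HasDerivAt φ (φ₁ t) t)
    (h2 : ∀ t ∈ Set.Icc (0:ℝ) 1, HasDerivAt φ₁ (φ₂ t) t)
    (hK : ∀ t ∈ Set.Icc (0:ℝ) 1, |φ₂ t| ≤ K) :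
    |φ 1 - φ 0 - φ₁ 0| ≤ K / 2 := by
  have stepA : ∀ t ∈ Set.Icc (0:ℝ) 1, ‖φ₁ t - φ₁ 0‖ ≤ K * (t - 0) :=
    norm_image_sub_le_of_norm_deriv_le_segment'
      (fun t ht => (h2 t ht).hasDerivWithinAt)
      (fun t ht => by
        rw [Real.norm_eq_abs]; exact hK t (Set.Ico_subset_Icc_self ht))
  set f : ℝ → ℝ := fun t => φ t - φ 0 - t * φ₁ 0 with hfdef
  have hf' : ∀ t ∈ Set.Ico (0:ℝ) 1, HasDerivWithinAt f (φ₁ t - φ₁ 0) (Set.Ici t) t := by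
    intro t ht
    have h := ((h1 t (Set.Ico_subset_Icc_self ht)).sub_const (φ 0)).sub
      ((hasDerivAt_id t).mul_const (φ₁ 0))
    simpa [hfdef, Pi.sub_def] using h.hasDerivWithinAt
  have hcont : ContinuousOn f (Set.Icc 0 1) := by
    intro t ht
    exact (((h1 t ht).continuousAt.sub continuousAt_const).sub
      ((continuousAt_id.mul continuousAt_const))).continuousWithinAt
  have hB : ∀ t : ℝ, HasDerivAt (fun s => K / 2 * s ^ 2) (K / 2 * (2 * t)) t := by
    intro t
    simpa using (hasDerivAt_pow 2 t).const_mul (K / 2)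
  have bound : ∀ t ∈ Set.Ico (0:ℝ) 1, ‖φ₁ t - φ₁ 0‖ ≤ K / 2 * (2 * t) := by
    intro t ht
    have := stepA t (Set.Ico_subset_Icc_self ht)
    nlinarith [this]
  have key := image_norm_le_of_norm_deriv_right_le_deriv_boundary hcont hf'
    (by simp [hfdef]) hB bound (Set.right_mem_Icc.2 zero_le_one)
  simpa [hfdef] using key

theorem aux_key {n : ℕ} {U : Set (EuclideanSpace ℝ (Fin n))} (hU : IsOpen U)
    {g : EuclideanSpace ℝ (Fin n) → EuclideanSpace ℝ (Fin n)} (hg : ContDiffOn ℝ 2 g U)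
    {σ : Set (EuclideanSpace ℝ (Fin n))} (hσ : Convex ℝ σ) (hσU : σ ⊆ U)
    {β : ℝ} (hβ0 : 0 ≤ β)
    (hβ : ∀ ξ ∈ σ, ∀ pp q r : Fin n,
      |(iteratedFDeriv ℝ 2 g ξ ![EuclideanSpace.single q 1, EuclideanSpace.single r 1]) pp| ≤ β)
    {a y : EuclideanSpace ℝ (Fin n)} (ha : a ∈ σ) (hy : y ∈ σ) (k : Fin n) :
    |g y k - g a k - fderiv ℝ (⇑(EuclideanSpace.proj (𝕜 := ℝ) k) ∘ g) a (y - a)|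
      ≤ (n : ℝ) * β * ‖y - a‖ ^ 2 / 2 := by
  set ψ : EuclideanSpace ℝ (Fin n) → ℝ := ⇑(EuclideanSpace.proj (𝕜 := ℝ) k) ∘ g with hψdef
  have hψ : ContDiffOn ℝ 2 ψ U := ContDiffOn.continuousLinearMap_comp (EuclideanSpace.proj (𝕜 := ℝ) k) hg
  set v := y - a with hvdef
  set γ : ℝ → EuclideanSpace ℝ (Fin n) := fun t => a + t • v with hγdef
  have hγσ : ∀ t ∈ Set.Icc (0:ℝ) 1, γ t ∈ σ := fun t ht => hσ.add_smul_sub_mem ha hy ht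
  have hγU : ∀ t ∈ Set.Icc (0:ℝ) 1, γ t ∈ U := fun t ht => hσU (hγσ t ht)
  have hγ' : ∀ t : ℝ, HasDerivAt γ v t := by
    intro t
    simpa [hγdef] using ((hasDerivAt_id t).smul_const v).const_add a
  have d1 : ∀ ξ ∈ U, DifferentiableAt ℝ ψ ξ := by
    intro ξ hξ
    exact (hψ.contDiffAt (hU.mem_nhds hξ)).differentiableAt (by norm_num)
  have d2 : ∀ ξ ∈ U, DifferentiableAt ℝ (fderiv ℝ ψ) ξ := by
    intro ξ hξ
    exact ((hψ.contDiffAt (hU.mem_nhds hξ)).fderiv_right (m := 1) (by norm_num)).differentiableAt one_ne_zero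
  have h1 : ∀ t ∈ Set.Icc (0:ℝ) 1, HasDerivAt (fun s => ψ (γ s)) (fderiv ℝ ψ (γ t) v) t := by
    intro t ht
    exact (d1 (γ t) (hγU t ht)).hasFDerivAt.comp_hasDerivAt t (hγ' t)
  have h2 : ∀ t ∈ Set.Icc (0:ℝ) 1,
      HasDerivAt (fun s => fderiv ℝ ψ (γ s) v) (fderiv ℝ (fderiv ℝ ψ) (γ t) v v) t := by
    intro t ht
    have hA : HasDerivAt (fun s => fderiv ℝ ψ (γ s)) (fderiv ℝ (fderiv ℝ ψ) (γ t) v) t :=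
      (d2 (γ t) (hγU t ht)).hasFDerivAt.comp_hasDerivAt t (hγ' t)
    simpa using hA.clm_apply (hasDerivAt_const t v)
  -- bound on the second derivative along the segment
  have hbound : ∀ t ∈ Set.Icc (0:ℝ) 1,
      |fderiv ℝ (fderiv ℝ ψ) (γ t) v v| ≤ (n : ℝ) * β * ‖v‖ ^ 2 := by
    intro t ht
    set ξ := γ t with hξdef
    have hξσ : ξ ∈ σ := hγσ t ht
    have hξU : ξ ∈ U := hγU t ht
    set B := fderiv ℝ (fderiv ℝ ψ) ξ with hBdef
    have hBqr : ∀ q r : Fin n,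
        |B (EuclideanSpace.single q 1) (EuclideanSpace.single r 1)| ≤ β := by
      intro q r
      have e1 : iteratedFDeriv ℝ 2 ψ ξ ![EuclideanSpace.single q 1, EuclideanSpace.single r 1]
          = B (EuclideanSpace.single q 1) (EuclideanSpace.single r 1) := by
        rw [iteratedFDeriv_two_apply]
        simp [hBdef]
      have e2 : iteratedFDeriv ℝ 2 ψ ξ ![EuclideanSpace.single q 1, EuclideanSpace.single r 1]
          = (iteratedFDeriv ℝ 2 g ξ ![EuclideanSpace.single q 1, EuclideanSpace.single r 1]) k := by
        rw [← iteratedFDerivWithin_of_isOpen 2 hU hξU,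
          (EuclideanSpace.proj (𝕜 := ℝ) k).iteratedFDerivWithin_comp_left (hg ξ hξU) hU.uniqueDiffOn hξU
            le_rfl]
        simp [iteratedFDerivWithin_of_isOpen 2 hU hξU]
      rw [← e1, e2]
      exact hβ ξ hξσ k q r
    have hv : v = ∑ q, v q • EuclideanSpace.single q (1:ℝ) := by
      ext r
      rw [WithLp.ofLp_sum, Finset.sum_apply]
      simp [EuclideanSpace.single_apply]
    have hBvv : B v v = ∑ q, ∑ r, v q * (v r *
        B (EuclideanSpace.single q 1) (EuclideanSpace.single r 1)) := by
      conv_lhs => rw [hv]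
      simp only [map_sum, ContinuousLinearMap.sum_apply, map_smul,
        ContinuousLinearMap.smul_apply, smul_eq_mul, Finset.mul_sum, Finset.sum_apply]
      rw [Finset.sum_comm]
      exact Finset.sum_congr rfl fun q _ => Finset.sum_congr rfl fun r _ => by ring
    have habs : |B v v| ≤ ∑ q, ∑ r, |v q| * |v r| * β := by
      rw [hBvv]
      refine (Finset.abs_sum_le_sum_abs _ _).trans (Finset.sum_le_sum fun q _ => ?_)
      refine (Finset.abs_sum_le_sum_abs _ _).trans (Finset.sum_le_sum fun r _ => ?_)
      rw [abs_mul, abs_mul, mul_assoc]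
      exact mul_le_mul_of_nonneg_left
        (mul_le_mul_of_nonneg_left (hBqr q r) (abs_nonneg _)) (abs_nonneg _)
    have hsum : ∑ q, ∑ r, |v q| * |v r| * β = (∑ q, |v q|) ^ 2 * β := by
      rw [sq, Finset.sum_mul, Finset.sum_mul]
      refine Finset.sum_congr rfl fun q _ => ?_
      rw [Finset.mul_sum, Finset.sum_mul]
    have hl1 : (∑ q, |v q|) ^ 2 ≤ (n : ℝ) * ‖v‖ ^ 2 := by
      have := sq_sum_le_card_mul_sum_sq (s := Finset.univ) (f := fun q => |v q|)
      have hnorm : ‖v‖ ^ 2 = ∑ q, |v q| ^ 2 := by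
        rw [EuclideanSpace.norm_eq, Real.sq_sqrt (by positivity)]
        exact Finset.sum_congr rfl fun q _ => by rw [Real.norm_eq_abs]
      simpa [hnorm, Finset.card_univ] using this
    calc |B v v| ≤ (∑ q, |v q|) ^ 2 * β := by rw [← hsum]; exact habs
      _ ≤ (n : ℝ) * ‖v‖ ^ 2 * β := mul_le_mul_of_nonneg_right hl1 hβ0
      _ = (n : ℝ) * β * ‖v‖ ^ 2 := by ring
  have key := aux_taylor1d_s9 h1 h2 hbound
  have hγ1 : γ 1 = y := by simp [hγdef, hvdef]
  have hγ0 : γ 0 = a := by simp [hγdef]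
  rw [hγ1, hγ0] at key
  simpa [hψdef] using key

/-- Theorem 1: Dini derivative bound for a CPA function on a simplex.
If `W` is affine on the simplex `σ = co{x₀,…,x_n}` with gradient `∇W`, `|∇W| ≤ l`
componentwise, the second partials of `g` are bounded by `β` on `σ`, and the segment from
`x = Σ αⱼ xⱼ` in direction `g x` initially stays in `σ`, then
`D⁺W(x; g x) ≤ Σⱼ αⱼ (⟨g(xⱼ), ∇W⟩ + cⱼ β 1ᵀl)`. -/
theorem cpa_dini_derivative_bound
    {n : ℕ} (hn : 1 ≤ n) (p : Fin (n + 1) → EuclideanSpace ℝ (Fin n))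
    (U : Set (EuclideanSpace ℝ (Fin n))) (hU : IsOpen U)
    (hσU : convexHull ℝ (Set.range p) ⊆ U)
    (g : EuclideanSpace ℝ (Fin n) → EuclideanSpace ℝ (Fin n)) (hg : ContDiffOn ℝ 2 g U)
    (β : ℝ)
    (hβ : ∀ ξ ∈ convexHull ℝ (Set.range p), ∀ pp q r : Fin n,
      |(iteratedFDeriv ℝ 2 g ξ ![EuclideanSpace.single q 1, EuclideanSpace.single r 1]) pp|
        ≤ β)
    (W : EuclideanSpace ℝ (Fin n) → ℝ) (gradW : EuclideanSpace ℝ (Fin n)) (ω : ℝ)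
    (hW : ∀ z ∈ convexHull ℝ (Set.range p), W z = ⟪gradW, z⟫ + ω)
    (l : Fin n → ℝ) (hl : ∀ k : Fin n, |gradW k| ≤ l k)
    (α : Fin (n + 1) → ℝ) (hα : ∀ j, 0 ≤ α j) (hαsum : ∑ j, α j = 1)
    (x : EuclideanSpace ℝ (Fin n)) (hx : x = ∑ j, α j • p j)
    (hseg : ∃ h₀ : ℝ, 0 < h₀ ∧ ∀ h ∈ Set.Icc (0 : ℝ) h₀,
      x + h • g x ∈ convexHull ℝ (Set.range p))
    (c : Fin (n + 1) → ℝ) (hc0 : c 0 = 0)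
    (hc : ∀ j : Fin (n + 1), j ≠ 0 →
      c j = ((n : ℝ) / 2) * ‖p j - p 0‖ *
        ((⨆ k : Fin n, ‖p k.succ - p 0‖) + ‖p j - p 0‖)) :
    Filter.limsup (fun h : ℝ => (W (x + h • g x) - W x) / h) (nhdsWithin 0 (Set.Ioi 0))
      ≤ ∑ j, α j * (⟪g (p j), gradW⟫ + c j * β * ∑ k, l k) := by
  obtain ⟨h₀, h₀pos, hsegm⟩ := hseg
  haveI : Nonempty (Fin n) := ⟨⟨0, hn⟩⟩
  have hσconv : Convex ℝ (convexHull ℝ (Set.range p)) := convex_convexHull ℝ _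
  have hmem : ∀ j, p j ∈ convexHull ℝ (Set.range p) := fun j => subset_convexHull ℝ _ ⟨j, rfl⟩
  have hxσ : x ∈ convexHull ℝ (Set.range p) := by
    rw [hx]; exact hσconv.sum_mem (fun j _ => hα j) hαsum (fun j _ => hmem j)
  have hEv : ∀ᶠ h in nhdsWithin 0 (Set.Ioi 0),
      (W (x + h • g x) - W x) / h = ⟪gradW, g x⟫ := by
    filter_upwards [Ioc_mem_nhdsGT_of_mem (Set.mem_Ico.2 ⟨le_refl 0, h₀pos⟩)] with h hh
    have hne : h ≠ 0 := ne_of_gt hh.1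
    rw [hW _ (hsegm h ⟨hh.1.le, hh.2⟩), hW x hxσ, inner_add_right, real_inner_smul_right]
    field_simp
    ring!
  rw [Filter.limsup_congr hEv, Filter.limsup_const]
  -- Step 2
  have hβ0 : 0 ≤ β :=
    le_trans (abs_nonneg _) (hβ (p 0) (hmem 0) ⟨0, hn⟩ ⟨0, hn⟩ ⟨0, hn⟩)
  have hl0 : ∀ k, 0 ≤ l k := fun k => le_trans (abs_nonneg _) (hl k)
  set M := ⨆ k : Fin n, ‖p k.succ - p 0‖ with hMdef
  have hMb : ∀ k : Fin n, ‖p k.succ - p 0‖ ≤ M := fun k =>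
    le_ciSup (f := fun k : Fin n => ‖p k.succ - p 0‖) (Set.Finite.bddAbove (Set.finite_range _)) k
  have hM : ∀ j, ‖p j - p 0‖ ≤ M := by
    intro j
    induction j using Fin.cases with
    | zero => simpa using le_trans (norm_nonneg (p (⟨0, hn⟩ : Fin n).succ - p 0)) (hMb ⟨0, hn⟩)
    | succ i => exact hMb i
  have hsumdiff : ∑ j, α j • (p j - p 0) = x - p 0 := by
    have : ∑ j, α j • (p j - p 0) = (∑ j, α j • p j) - (∑ j, α j) • p 0 := by
      rw [Finset.sum_smul, ← Finset.sum_sub_distrib]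
      exact Finset.sum_congr rfl fun j _ => by rw [smul_sub]
    rw [this, hαsum, one_smul, ← hx]
  have hxnorm : ‖x - p 0‖ ≤ ∑ j, α j * ‖p j - p 0‖ := by
    rw [← hsumdiff]
    refine (norm_sum_le _ _).trans (le_of_eq (Finset.sum_congr rfl fun j _ => ?_))
    rw [norm_smul, Real.norm_eq_abs, abs_of_nonneg (hα j)]
  have hxM : ‖x - p 0‖ ≤ M := by
    refine hxnorm.trans ?_
    calc ∑ j, α j * ‖p j - p 0‖ ≤ ∑ j, α j * M :=
          Finset.sum_le_sum fun j _ => mul_le_mul_of_nonneg_left (hM j) (hα j)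
      _ = M := by rw [← Finset.sum_mul, hαsum, one_mul]
  have hEk : ∀ k : Fin n, |g x k - ∑ j, α j * g (p j) k| ≤ ∑ j, α j * (c j * β) := by
    intro k
    set Lk : EuclideanSpace ℝ (Fin n) →L[ℝ] ℝ :=
      fderiv ℝ (⇑(EuclideanSpace.proj (𝕜 := ℝ) k) ∘ g) (p 0) with hLkdef
    have hR : ∀ z ∈ convexHull ℝ (Set.range p),
        |g z k - g (p 0) k - Lk (z - p 0)| ≤ (n : ℝ) * β * ‖z - p 0‖ ^ 2 / 2 := fun z hz =>
      aux_key hU hg hσconv hσU hβ0 hβ (hmem 0) hz k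
    have hcancel : Lk (x - p 0) = ∑ j, α j * Lk (p j - p 0) := by
      rw [← hsumdiff, map_sum]
      exact Finset.sum_congr rfl fun j _ => by rw [map_smul, smul_eq_mul]
    have e1 : ∑ j, α j * (g (p j) k - g (p 0) k - Lk (p j - p 0))
        = (∑ j, α j * g (p j) k) - g (p 0) k - Lk (x - p 0) := by
      rw [hcancel]
      simp only [mul_sub, Finset.sum_sub_distrib, ← Finset.sum_mul, hαsum, one_mul]
    have hgx : g x k - ∑ j, α j * g (p j) k
        = (g x k - g (p 0) k - Lk (x - p 0))
          - ∑ j, α j * (g (p j) k - g (p 0) k - Lk (p j - p 0)) := by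
      rw [e1]; ring
    have hRx : |g x k - g (p 0) k - Lk (x - p 0)|
        ≤ (n : ℝ) * β / 2 * ((∑ j, α j * ‖p j - p 0‖) * M) := by
      refine (hR x hxσ).trans ?_
      have hsq : ‖x - p 0‖ ^ 2 ≤ (∑ j, α j * ‖p j - p 0‖) * M := by
        rw [sq]
        exact mul_le_mul hxnorm hxM (norm_nonneg _)
          (Finset.sum_nonneg fun j _ => mul_nonneg (hα j) (norm_nonneg _))
      calc (n : ℝ) * β * ‖x - p 0‖ ^ 2 / 2 = (n : ℝ) * β / 2 * ‖x - p 0‖ ^ 2 := by ring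
        _ ≤ _ := mul_le_mul_of_nonneg_left hsq (by positivity)
    have hRj : ∀ j, |g (p j) k - g (p 0) k - Lk (p j - p 0)|
        ≤ (n : ℝ) * β / 2 * ‖p j - p 0‖ ^ 2 := fun j =>
      (hR (p j) (hmem j)).trans (le_of_eq (by ring))
    calc |g x k - ∑ j, α j * g (p j) k|
        ≤ |g x k - g (p 0) k - Lk (x - p 0)|
          + |∑ j, α j * (g (p j) k - g (p 0) k - Lk (p j - p 0))| := by
          rw [hgx]; exact abs_sub _ _
      _ ≤ (n : ℝ) * β / 2 * ((∑ j, α j * ‖p j - p 0‖) * M)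
          + ∑ j, α j * ((n : ℝ) * β / 2 * ‖p j - p 0‖ ^ 2) := by
          refine add_le_add hRx ((Finset.abs_sum_le_sum_abs _ _).trans
            (Finset.sum_le_sum fun j _ => ?_))
          rw [abs_mul, abs_of_nonneg (hα j)]
          exact mul_le_mul_of_nonneg_left (hRj j) (hα j)
      _ = ∑ j, α j * ((n : ℝ) * β / 2 * (‖p j - p 0‖ * (M + ‖p j - p 0‖))) := by
          rw [Finset.sum_mul, Finset.mul_sum, ← Finset.sum_add_distrib]
          exact Finset.sum_congr rfl fun j _ => by ring
      _ ≤ ∑ j, α j * (c j * β) := by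
          refine Finset.sum_le_sum fun j _ => ?_
          by_cases hj : j = 0
          · subst hj; simp [hc0]
          · rw [hc j hj]
            exact le_of_eq (by ring)
  -- inner product manipulations
  have hswap : ∑ j, α j * ⟪gradW, g (p j)⟫ = ∑ k, gradW k * ∑ j, α j * g (p j) k := by
    simp only [PiLp.inner_apply, RCLike.inner_apply, conj_trivial, Finset.mul_sum]
    rw [Finset.sum_comm]
    exact Finset.sum_congr rfl fun k _ => Finset.sum_congr rfl fun j _ => by ring
  have hsplit : ⟪gradW, g x⟫ = (∑ j, α j * ⟪gradW, g (p j)⟫)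
      + ∑ k, gradW k * (g x k - ∑ j, α j * g (p j) k) := by
    rw [hswap]
    simp only [PiLp.inner_apply, RCLike.inner_apply, conj_trivial, mul_sub,
      Finset.sum_sub_distrib]
    ring
    exact Finset.sum_congr rfl fun k _ => mul_comm _ _
  have herr : ∑ k, gradW k * (g x k - ∑ j, α j * g (p j) k)
      ≤ (∑ j, α j * (c j * β)) * ∑ k, l k := by
    have hD0 : 0 ≤ ∑ j, α j * (c j * β) :=
      le_trans (abs_nonneg _) (hEk ⟨0, hn⟩)
    calc ∑ k, gradW k * (g x k - ∑ j, α j * g (p j) k)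
        ≤ ∑ k, l k * (∑ j, α j * (c j * β)) := by
          refine Finset.sum_le_sum fun k _ => ?_
          calc gradW k * (g x k - ∑ j, α j * g (p j) k)
              ≤ |gradW k * (g x k - ∑ j, α j * g (p j) k)| := le_abs_self _
            _ = |gradW k| * |g x k - ∑ j, α j * g (p j) k| := abs_mul _ _
            _ ≤ l k * (∑ j, α j * (c j * β)) :=
                mul_le_mul (hl k) (hEk k) (abs_nonneg _) (hl0 k)
      _ = (∑ j, α j * (c j * β)) * ∑ k, l k := by
          rw [← Finset.sum_mul, mul_comm]
  have hfinal : ∑ j, α j * (⟪g (p j), gradW⟫ + c j * β * ∑ k, l k)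
      = (∑ j, α j * ⟪gradW, g (p j)⟫) + (∑ j, α j * (c j * β)) * ∑ k, l k := by
    simp only [mul_add, Finset.sum_add_distrib]
    congr 1
    · exact Finset.sum_congr rfl fun j _ => by rw [real_inner_comm]
    · rw [Finset.sum_mul]
      exact Finset.sum_congr rfl fun j _ => by ring
  rw [hfinal, hsplit]
  exact add_le_add le_rfl herr
end

section
/- Let n ≥ 1, let φ, r, s, d, e ∈ ℝ, let p, q ∈ ℝⁿ, and let κ > 0. Let Q be the symmetric (2n + 5) × (2n + 5) real block matrix Q = [[φ, pᵀ, qᵀ, r, s, d, e]; [p, −2·I_n, 0, 0, 0, 0, 0]; [q, 0, −2·I_n, 0, 0, 0, 0]; [r, 0, 0, −2, 0, 0, 0]; [s, 0, 0, 0, −2, 0, 0]; [d, 0, 0, 0, 0, −2/κ, 0]; [e, 0, 0, 0, 0, 0, −2/κ]], where I_n is the n × n identity matrix. If Q is negative semidefinite, then φ + ⟨p, q⟩ + r·s + κ·d·e ≤ 0. -/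
open Matrix

/-- The symmetric `(2n+5) × (2n+5)` block matrix
`Q = [[φ, pᵀ, qᵀ, r, s, d, e]; [p, -2Iₙ, 0, 0, 0, 0, 0]; [q, 0, -2Iₙ, 0, 0, 0, 0];
[r, 0, 0, -2, 0, 0, 0]; [s, 0, 0, 0, -2, 0, 0]; [d, 0, 0, 0, 0, -2/κ, 0];
[e, 0, 0, 0, 0, 0, -2/κ]]` from Theorem 4,
indexed by `Fin 1 ⊕ Fin n ⊕ Fin n ⊕ Fin 1 ⊕ Fin 1 ⊕ Fin 1 ⊕ Fin 1`. -/
noncomputable def schurBlockQ {n : ℕ} (φ r s d e κ : ℝ) (p q : Fin n → ℝ) :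
    Matrix (Fin 1 ⊕ Fin n ⊕ Fin n ⊕ Fin 1 ⊕ Fin 1 ⊕ Fin 1 ⊕ Fin 1)
      (Fin 1 ⊕ Fin n ⊕ Fin n ⊕ Fin 1 ⊕ Fin 1 ⊕ Fin 1 ⊕ Fin 1) ℝ :=
  fun i j =>
    match i, j with
    | .inl _, .inl _ => φ
    | .inl _, .inr (.inl k) => p k
    | .inr (.inl k), .inl _ => p k
    | .inl _, .inr (.inr (.inl k)) => q k
    | .inr (.inr (.inl k)), .inl _ => q k
    | .inl _, .inr (.inr (.inr (.inl _))) => r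
    | .inr (.inr (.inr (.inl _))), .inl _ => r
    | .inl _, .inr (.inr (.inr (.inr (.inl _)))) => s
    | .inr (.inr (.inr (.inr (.inl _)))), .inl _ => s
    | .inl _, .inr (.inr (.inr (.inr (.inr (.inl _))))) => d
    | .inr (.inr (.inr (.inr (.inr (.inl _))))), .inl _ => d
    | .inl _, .inr (.inr (.inr (.inr (.inr (.inr _))))) => e
    | .inr (.inr (.inr (.inr (.inr (.inr _))))), .inl _ => e
    | .inr (.inl k), .inr (.inl k') => if k = k' then -2 else 0
    | .inr (.inr (.inl k)), .inr (.inr (.inl k')) => if k = k' then -2 else 0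
    | .inr (.inr (.inr (.inl _))), .inr (.inr (.inr (.inl _))) => -2
    | .inr (.inr (.inr (.inr (.inl _)))), .inr (.inr (.inr (.inr (.inl _)))) => -2
    | .inr (.inr (.inr (.inr (.inr (.inl _))))),
        .inr (.inr (.inr (.inr (.inr (.inl _))))) => -2 / κ
    | .inr (.inr (.inr (.inr (.inr (.inr _))))),
        .inr (.inr (.inr (.inr (.inr (.inr _))))) => -2 / κ
    | _, _ => 0

/-- convex overbounding in Theorem 4, second block matrix. If `κ > 0`
and the block matrix `Q` is negative semidefinite, then
`φ + ⟨p, q⟩ + r·s + κ·d·e ≤ 0`. -/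
theorem schur_block_Q_neg_semidef
    {n : ℕ} (hn : 1 ≤ n) (φ r s d e κ : ℝ) (hκ : 0 < κ) (p q : Fin n → ℝ)
    (hQ : ∀ v : Fin 1 ⊕ Fin n ⊕ Fin n ⊕ Fin 1 ⊕ Fin 1 ⊕ Fin 1 ⊕ Fin 1 → ℝ,
      v ⬝ᵥ (schurBlockQ φ r s d e κ p q *ᵥ v) ≤ 0) :
    φ + p ⬝ᵥ q + r * s + κ * d * e ≤ 0 := by
  have h := hQ (Sum.elim (fun _ => 1) (Sum.elim (fun k => (p k + q k) / 4)
    (Sum.elim (fun k => (p k + q k) / 4) (Sum.elim (fun _ => (r+s)/4)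
      (Sum.elim (fun _ => (r+s)/4) (Sum.elim (fun _ => κ*(d+e)/4) (fun _ => κ*(d+e)/4)))))))
  simp only [dotProduct, mulVec, Fintype.sum_sum_type, Fin.sum_univ_one, schurBlockQ,
    Sum.elim_inl, Sum.elim_inr, ite_mul, mul_ite, mul_zero, zero_mul, neg_mul,
    Finset.sum_ite_eq, Finset.mem_univ, if_true, Finset.sum_const_zero,
    add_zero, zero_add, mul_one, one_mul] at h
  have hκ' : κ ≠ 0 := ne_of_gt hκ
  have hdiv : (-2 / κ) * (κ * (d + e) / 4) = -((d + e) / 2) := by field_simp; ring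
  rw [hdiv] at h
  have h1 : (∑ x : Fin n, p x * ((p x + q x) / 4)) + (∑ x : Fin n, q x * ((p x + q x) / 4))
      + (∑ x : Fin n, (p x + q x) / 4 * (p x + -(2 * ((p x + q x) / 4))))
      + (∑ x : Fin n, (p x + q x) / 4 * (q x + -(2 * ((p x + q x) / 4))))
      = ∑ x : Fin n, (p x + q x) ^ 2 / 4 := by
    rw [← Finset.sum_add_distrib, ← Finset.sum_add_distrib, ← Finset.sum_add_distrib]
    exact Finset.sum_congr rfl fun x _ => by ring
  have h2 : (∑ x : Fin n, p x * q x) ≤ ∑ x : Fin n, (p x + q x) ^ 2 / 4 :=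
    Finset.sum_le_sum fun x _ => by nlinarith [sq_nonneg (p x - q x)]
  have hpq : p ⬝ᵥ q = ∑ x : Fin n, p x * q x := rfl
  rw [hpq]
  nlinarith [sq_nonneg (r - s), mul_nonneg hκ.le (sq_nonneg (d - e))]
end
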